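/- arXiv:2201.13158 — 4 statements merged into one kernel-verified Lean document; each statement's English description precedes it below -/
import Mathlib

section
/- (Compatibility with the polarized responsive extension principle) Let i be a player and A, B coalitions containing i with A ⪰^{+0−}_i B, i.e., there exist injective functions φ : B ∩ N⁺_i → A ∩ N⁺_i with φ(j) ⊵_i j for every j ∈ B ∩ N⁺_i and ψ : A ∩ N⁻_i → B ∩ N⁻_i with k ⊵_i ψ(k) for every k ∈ A ∩ N⁻_i. Then δ(⊵_i, A) ≤ δ(⊵_i, B), i.e., A ⪰_i B. -/
/-! Basic machinery: weak orders, linear extensions, Kendall-tau,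
and the directed Hausdorff–Kendall-tau distance. -/

section Orders

variable {P : Type*}

/-- The strict part `x ▷ y` of a relation `R`. -/
def strictOf (R : P → P → Prop) (x y : P) : Prop := R x y ∧ ¬ R y x

/-- The indifference part `x ∼ y` of a relation `R`. -/
def indiffOf (R : P → P → Prop) (x y : P) : Prop := R x y ∧ R y x

/-- `R` is a weak order (total preorder) on the finite set `S`. -/
structure IsWeakOrderOn (S : Finset P) (R : P → P → Prop) : Prop where
  refl : ∀ x ∈ S, R x x
  trans : ∀ x ∈ S, ∀ y ∈ S, ∀ z ∈ S, R x y → R y z → R x z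
  total : ∀ x ∈ S, ∀ y ∈ S, R x y ∨ R y x

/-- `A` is a linear extension on `S` of the weak order `R`: a strict total
order on `S` which is consistent with the strict part of `R`. -/
structure IsLinExtOn (S : Finset P) (R : P → P → Prop) (A : P → P → Prop) : Prop where
  irrefl : ∀ x ∈ S, ¬ A x x
  trans : ∀ x ∈ S, ∀ y ∈ S, ∀ z ∈ S, A x y → A y z → A x z
  total : ∀ x ∈ S, ∀ y ∈ S, x ≠ y → A x y ∨ A y x
  extend : ∀ x ∈ S, ∀ y ∈ S, strictOf R x y → A x y

/-- The Kendall-tau distance between two strict (linear) orders on `S`: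
the number of pairs ordered oppositely by the two orders. -/
noncomputable def kendallTau (S : Finset P) (A B : P → P → Prop) : ℕ :=
  Set.ncard {p : P × P | p.1 ∈ S ∧ p.2 ∈ S ∧ A p.1 p.2 ∧ B p.2 p.1}

/-- The directed Hausdorff–Kendall-tau distance `→τ(R1,R2)` between weak orders on `S`:
the maximum over linear extensions `B` of `R2` of the minimum over linear
extensions `A` of `R1` of `τ(A,B)`. -/
noncomputable def dirTau (S : Finset P) (R1 R2 : P → P → Prop) : ℕ :=
  sSup { n : ℕ | ∃ B : P → P → Prop, IsLinExtOn S R2 B ∧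
    n = sInf { m : ℕ | ∃ A : P → P → Prop, IsLinExtOn S R1 A ∧ m = kendallTau S A B } }

/-- The (undirected) Hausdorff–Kendall-tau distance `τ*`. -/
noncomputable def hkTau (S : Finset P) (R1 R2 : P → P → Prop) : ℕ :=
  max (dirTau S R1 R2) (dirTau S R2 R1)

-- ### machinery

structure StrictOn (S : Finset P) (L : P → P → Prop) : Prop where
  irrefl : ∀ x ∈ S, ¬ L x x
  trans : ∀ x ∈ S, ∀ y ∈ S, ∀ z ∈ S, L x y → L y z → L x z
  total : ∀ x ∈ S, ∀ y ∈ S, x ≠ y → L x y ∨ L y x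

lemma IsLinExtOn.strictOn {S : Finset P} {R A : P → P → Prop} (h : IsLinExtOn S R A) :
    StrictOn S A := ⟨h.irrefl, h.trans, h.total⟩

lemma StrictOn.asymm {S : Finset P} {L : P → P → Prop} (h : StrictOn S L)
    {x y : P} (hx : x ∈ S) (hy : y ∈ S) (hxy : L x y) : ¬ L y x :=
  fun h' => h.irrefl x hx (h.trans x hx y hy x hx hxy h')

lemma wellOrderingRel_strictOn (S : Finset P) : StrictOn S WellOrderingRel := by
  refine ⟨fun x _ => irrefl_of _ x, fun x _ y _ z _ a b => trans_of _ a b, fun x _ y _ h => ?_⟩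
  rcases trichotomous_of WellOrderingRel x y with h1|h1|h1
  · exact Or.inl h1
  · exact absurd h1 h
  · exact Or.inr h1

/-- Refine a weak order by a strict order to break ties. -/
def refineBy (R L : P → P → Prop) (x y : P) : Prop :=
  strictOf R x y ∨ (R x y ∧ R y x ∧ L x y)

lemma refineBy_isLinExtOn {S : Finset P} {R L : P → P → Prop}
    (hR : IsWeakOrderOn S R) (hL : StrictOn S L) : IsLinExtOn S R (refineBy R L) := by
  constructor
  · rintro x hx (⟨h1, h2⟩ | ⟨h1, h2, h3⟩)
    · exact h2 h1
    · exact hL.irrefl x hx h3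
  · rintro x hx y hy z hz (⟨h1, h2⟩ | ⟨h1, h2, h3⟩) (⟨h4, h5⟩ | ⟨h4, h5, h6⟩)
    · exact Or.inl ⟨hR.trans x hx y hy z hz h1 h4,
        fun hzx => h2 (hR.trans y hy z hz x hx h4 hzx)⟩
    · exact Or.inl ⟨hR.trans x hx y hy z hz h1 h4,
        fun hzx => h2 (hR.trans y hy z hz x hx h4 hzx)⟩
    · exact Or.inl ⟨hR.trans x hx y hy z hz h1 h4,
        fun hzx => h5 (hR.trans z hz x hx y hy hzx h1)⟩
    · exact Or.inr ⟨hR.trans x hx y hy z hz h1 h4, hR.trans z hz y hy x hx h5 h2,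
        hL.trans x hx y hy z hz h3 h6⟩
  · intro x hx y hy hxy
    rcases hR.total x hx y hy with h | h
    · by_cases h' : R y x
      · rcases hL.total x hx y hy hxy with hl | hl
        · exact Or.inl (Or.inr ⟨h, h', hl⟩)
        · exact Or.inr (Or.inr ⟨h', h, hl⟩)
      · exact Or.inl (Or.inl ⟨h, h'⟩)
    · by_cases h' : R x y
      · rcases hL.total x hx y hy hxy with hl | hl
        · exact Or.inl (Or.inr ⟨h', h, hl⟩)
        · exact Or.inr (Or.inr ⟨h, h', hl⟩)
      · exact Or.inr (Or.inl ⟨h, h'⟩)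
  · exact fun x _ y _ h => Or.inl h

lemma IsWeakOrderOn.swap {S : Finset P} {R : P → P → Prop} (h : IsWeakOrderOn S R) :
    IsWeakOrderOn S (fun x y => R y x) :=
  ⟨h.refl, fun x hx y hy z hz h1 h2 => h.trans z hz y hy x hx h2 h1,
   fun x hx y hy => (h.total y hy x hx)⟩

lemma exists_linExt {S : Finset P} {R : P → P → Prop} (hR : IsWeakOrderOn S R) :
    ∃ A, IsLinExtOn S R A :=
  ⟨_, refineBy_isLinExtOn hR (wellOrderingRel_strictOn S)⟩

/-- The number of pairs in `S × S` satisfying `Q`. -/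
noncomputable def pairCount (S : Finset P) (Q : P → P → Prop) : ℕ :=
  Set.ncard {p : P × P | p.1 ∈ S ∧ p.2 ∈ S ∧ Q p.1 p.2}

lemma pairCount_finite (S : Finset P) (Q : P → P → Prop) :
    {p : P × P | p.1 ∈ S ∧ p.2 ∈ S ∧ Q p.1 p.2}.Finite := by
  apply Set.Finite.subset (S ×ˢ S).finite_toSet
  rintro ⟨a, b⟩ ⟨h1, h2, _⟩
  simp [Finset.mem_product, h1, h2]

lemma pairCount_mono {S : Finset P} {Q Q' : P → P → Prop}
    (h : ∀ x ∈ S, ∀ y ∈ S, Q x y → Q' x y) : pairCount S Q ≤ pairCount S Q' := by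
  apply Set.ncard_le_ncard _ (pairCount_finite S Q')
  rintro ⟨a, b⟩ ⟨h1, h2, h3⟩
  exact ⟨h1, h2, h a h1 b h2 h3⟩

lemma kendallTau_eq_pairCount (S : Finset P) (A B : P → P → Prop) :
    kendallTau S A B = pairCount S (fun x y => A x y ∧ B y x) := rfl

lemma kendallTau_le (S : Finset P) (A B : P → P → Prop) :
    kendallTau S A B ≤ (S ×ˢ S).card := by
  rw [← Set.ncard_coe_finset]
  apply Set.ncard_le_ncard _ (S ×ˢ S).finite_toSet
  rintro ⟨a, b⟩ ⟨h1, h2, _⟩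
  simp [Finset.mem_product, h1, h2]

/-- The key formula: the directed Hausdorff–Kendall-tau distance between weak orders
equals the number of pairs strictly ordered by `R1` but not ordered the same way
strictly by `R2`. -/
theorem dirTau_eq {S : Finset P} {R1 R2 : P → P → Prop}
    (h1 : IsWeakOrderOn S R1) (h2 : IsWeakOrderOn S R2) :
    dirTau S R1 R2 = pairCount S (fun x y => strictOf R1 x y ∧ ¬ strictOf R2 x y) := by
  set c := pairCount S (fun x y => strictOf R1 x y ∧ ¬ strictOf R2 x y) with hc
  obtain ⟨α₀, hα₀⟩ := exists_linExt h1
  apply le_antisymm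
  · -- upper bound
    apply csSup_le'
    rintro n ⟨β, hβ, rfl⟩
    have hα : IsLinExtOn S R1 (refineBy R1 β) := refineBy_isLinExtOn h1 hβ.strictOn
    have hle : kendallTau S (refineBy R1 β) β ≤ c := by
      rw [kendallTau_eq_pairCount]
      apply pairCount_mono
      rintro x hx y hy ⟨hpA, hpB⟩
      constructor
      · rcases hpA with h | ⟨ha, hb, hab⟩
        · exact h
        · exact absurd hpB (hβ.strictOn.asymm hx hy hab)
      · intro hstr
        exact hβ.strictOn.asymm hy hx hpB (hβ.extend x hx y hy hstr)
    exact le_trans (Nat.sInf_le ⟨_, hα, rfl⟩) hle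
  · -- lower bound
    set L1 := refineBy (fun x y => R1 y x) WellOrderingRel with hL1def
    have hL1 : IsLinExtOn S (fun x y => R1 y x) L1 :=
      refineBy_isLinExtOn h1.swap (wellOrderingRel_strictOn S)
    set β := refineBy R2 L1 with hβdef
    have hβ : IsLinExtOn S R2 β := refineBy_isLinExtOn h2 hL1.strictOn
    have key : ∀ A, IsLinExtOn S R1 A → c ≤ kendallTau S A β := by
      intro A hA
      rw [kendallTau_eq_pairCount]
      apply pairCount_mono
      rintro x hx y hy ⟨hstr1, hnstr2⟩
      refine ⟨hA.extend x hx y hy hstr1, ?_⟩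
      by_cases h21 : R2 x y
      · have h12 : R2 y x := by
          by_contra hcon
          exact hnstr2 ⟨h21, hcon⟩
        exact Or.inr ⟨h12, h21, Or.inl ⟨hstr1.1, hstr1.2⟩⟩
      · rcases h2.total x hx y hy with h | h
        · exact absurd h h21
        · exact Or.inl ⟨h, h21⟩
    set M := { m : ℕ | ∃ A : P → P → Prop, IsLinExtOn S R1 A ∧ m = kendallTau S A β } with hM
    have hMne : M.Nonempty := ⟨_, α₀, hα₀, rfl⟩
    have hcM : c ≤ sInf M := by
      obtain ⟨A, hA, hAm⟩ := Nat.sInf_mem hMne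
      rw [hAm]
      exact key A hA
    have hbdd : BddAbove { n : ℕ | ∃ B : P → P → Prop, IsLinExtOn S R2 B ∧
        n = sInf { m : ℕ | ∃ A : P → P → Prop, IsLinExtOn S R1 A ∧ m = kendallTau S A B } } := by
      refine ⟨(S ×ˢ S).card, ?_⟩
      rintro n ⟨B', hB', rfl⟩
      exact le_trans (Nat.sInf_le ⟨α₀, hα₀, rfl⟩) (kendallTau_le S α₀ B')
    exact le_trans hcM (le_csSup hbdd ⟨β, hβ, rfl⟩)

end Orders

/-! FEN-hedonic games with distance-based preferences. -/

section Game

/-- A FEN preference for player `i`: disjoint sets of friends and enemies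
(not containing `i`) together with weak orders on the friends and on the enemies. -/
structure FENPref (P : Type*) (i : P) where
  friends : Finset P
  enemies : Finset P
  Rp : P → P → Prop
  Rm : P → P → Prop
  disj : Disjoint friends enemies
  self_not_friend : i ∉ friends
  self_not_enemy : i ∉ enemies
  wo_p : IsWeakOrderOn friends Rp
  wo_m : IsWeakOrderOn enemies Rm

variable {P : Type*} {i : P}

/-- The weak order `⊵⁺_i` on `N⁺_i ∪ {i}`: the friends, ordered by `⊵_i`,
all strictly above `i`. -/
def FENPref.prefPlus (pr : FENPref P i) (x y : P) : Prop :=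
  (x ∈ pr.friends ∧ y ∈ pr.friends ∧ pr.Rp x y) ∨
  (x ∈ pr.friends ∧ y = i) ∨
  (x = i ∧ y = i)

/-- The weak order `⊵⁻_i` on `N⁻_i ∪ {i}`: `i` strictly above all enemies,
which are ordered by `⊵_i`. -/
def FENPref.prefMinus (pr : FENPref P i) (x y : P) : Prop :=
  (x = i ∧ y = i) ∨
  (x = i ∧ y ∈ pr.enemies) ∨
  (x ∈ pr.enemies ∧ y ∈ pr.enemies ∧ pr.Rm x y)

/-- The weak order `C⁺_i` on `N⁺_i ∪ {i}`: friends in `C` strictly above `i`,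
ordered by `⊵_i`; friends not in `C` strictly below `i`, ordered by the reverse of `⊵_i`. -/
def FENPref.coalPlus (pr : FENPref P i) (C : Finset P) (x y : P) : Prop :=
  (x ∈ pr.friends ∧ x ∈ C ∧ y ∈ pr.friends ∧ y ∈ C ∧ pr.Rp x y) ∨
  ((x ∈ pr.friends ∧ x ∈ C) ∧ (y = i ∨ (y ∈ pr.friends ∧ y ∉ C))) ∨
  (x = i ∧ (y = i ∨ (y ∈ pr.friends ∧ y ∉ C))) ∨
  (x ∈ pr.friends ∧ x ∉ C ∧ y ∈ pr.friends ∧ y ∉ C ∧ pr.Rp y x)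

/-- The weak order `C⁻_i` on `N⁻_i ∪ {i}`: enemies in `C` strictly above `i`,
ordered by the reverse of `⊵_i`; enemies not in `C` strictly below `i`, ordered by `⊵_i`. -/
def FENPref.coalMinus (pr : FENPref P i) (C : Finset P) (x y : P) : Prop :=
  (x ∈ pr.enemies ∧ x ∈ C ∧ y ∈ pr.enemies ∧ y ∈ C ∧ pr.Rm y x) ∨
  ((x ∈ pr.enemies ∧ x ∈ C) ∧ (y = i ∨ (y ∈ pr.enemies ∧ y ∉ C))) ∨
  (x = i ∧ (y = i ∨ (y ∈ pr.enemies ∧ y ∉ C))) ∨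
  (x ∈ pr.enemies ∧ x ∉ C ∧ y ∈ pr.enemies ∧ y ∉ C ∧ pr.Rm x y)

variable [DecidableEq P]

/-- `δ⁺(⊵_i, C) = →τ(⊵⁺_i, C⁺_i)`. -/
noncomputable def FENPref.deltaPlus (pr : FENPref P i) (C : Finset P) : ℕ :=
  dirTau (insert i pr.friends) pr.prefPlus (pr.coalPlus C)

/-- `δ⁻(⊵_i, C) = →τ(⊵⁻_i, C⁻_i)`. -/
noncomputable def FENPref.deltaMinus (pr : FENPref P i) (C : Finset P) : ℕ :=
  dirTau (insert i pr.enemies) pr.prefMinus (pr.coalMinus C)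

/-- `δ(⊵_i, C) = δ⁺(⊵_i, C) + δ⁻(⊵_i, C)`. -/
noncomputable def FENPref.delta (pr : FENPref P i) (C : Finset P) : ℕ :=
  pr.deltaPlus C + pr.deltaMinus C

end Game

/-! ### A generic three-block relation: a weakly ordered upper block `U`,
a middle element `c`, and a weakly ordered lower block `D`. -/

section ThreeBlock

variable {P : Type*} [DecidableEq P]

/-- Block relation: everything in `U` (ordered by `R1`) above `c`, above
everything in `D` (ordered by `R2`). -/
def tbRel (U D : Finset P) (c : P) (R1 R2 : P → P → Prop) (x y : P) : Prop :=
  (x ∈ U ∧ y ∈ U ∧ R1 x y) ∨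
  (x ∈ U ∧ (y = c ∨ y ∈ D)) ∨
  (x = c ∧ (y = c ∨ y ∈ D)) ∨
  (x ∈ D ∧ y ∈ D ∧ R2 x y)

variable {U D : Finset P} {c : P} {R1 R2 : P → P → Prop}

lemma tbRel_weak (hcU : c ∉ U) (hcD : c ∉ D) (hUD : Disjoint U D)
    (h1 : IsWeakOrderOn U R1) (h2 : IsWeakOrderOn D R2) :
    IsWeakOrderOn (insert c (U ∪ D)) (tbRel U D c R1 R2) := by
  have hUD' : ∀ {u : P}, u ∈ U → u ∈ D → False :=
    fun hu hd => (Finset.disjoint_left.mp hUD) hu hd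
  constructor
  · intro x hx
    rcases Finset.mem_insert.mp hx with rfl | hx
    · exact Or.inr (Or.inr (Or.inl ⟨rfl, Or.inl rfl⟩))
    · rcases Finset.mem_union.mp hx with hU | hD
      · exact Or.inl ⟨hU, hU, h1.refl x hU⟩
      · exact Or.inr (Or.inr (Or.inr ⟨hD, hD, h2.refl x hD⟩))
  · rintro x hx y hy z hz
      (⟨hxU, hyU, hxy⟩ | ⟨hxU, hy'⟩ | ⟨hxc, hy'⟩ | ⟨hxD, hyD, hxy⟩)
      (⟨hyU', hzU, hyz⟩ | ⟨hyU', hz'⟩ | ⟨hyc, hz'⟩ | ⟨hyD', hzD, hyz⟩)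
    -- x ∈ U, y ∈ U
    · exact Or.inl ⟨hxU, hzU, h1.trans x hxU y hyU z hzU hxy hyz⟩
    · exact Or.inr (Or.inl ⟨hxU, hz'⟩)
    · exact absurd (hyc ▸ hyU) hcU
    · exact absurd (hUD' hyU hyD') (fun h => h)
    -- x ∈ U, y = c or y ∈ D
    · rcases hy' with hyc | hyD
      · exact absurd (hyc ▸ hyU') hcU
      · exact absurd (hUD' hyU' hyD) (fun h => h)
    · rcases hy' with hyc | hyD
      · exact absurd (hyc ▸ hyU') hcU
      · exact absurd (hUD' hyU' hyD) (fun h => h)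
    · rcases hz' with hzc | hzD
      · exact Or.inr (Or.inl ⟨hxU, Or.inl hzc⟩)
      · exact Or.inr (Or.inl ⟨hxU, Or.inr hzD⟩)
    · exact Or.inr (Or.inl ⟨hxU, Or.inr hzD⟩)
    -- x = c, y = c or y ∈ D
    · rcases hy' with hyc | hyD
      · exact absurd (hyc ▸ hyU') hcU
      · exact absurd (hUD' hyU' hyD) (fun h => h)
    · rcases hy' with hyc | hyD
      · exact absurd (hyc ▸ hyU') hcU
      · exact absurd (hUD' hyU' hyD) (fun h => h)
    · exact Or.inr (Or.inr (Or.inl ⟨hxc, hz'⟩))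
    · exact Or.inr (Or.inr (Or.inl ⟨hxc, Or.inr hzD⟩))
    -- x ∈ D, y ∈ D
    · exact absurd (hUD' hyU' hyD) (fun h => h)
    · exact absurd (hUD' hyU' hyD) (fun h => h)
    · exact absurd (hyc ▸ hyD) hcD
    · exact Or.inr (Or.inr (Or.inr ⟨hxD, hzD, h2.trans x hxD y hyD z hzD hxy hyz⟩))
  · intro x hx y hy
    rcases Finset.mem_insert.mp hx with rfl | hx
    · rcases Finset.mem_insert.mp hy with rfl | hy
      · exact Or.inl (Or.inr (Or.inr (Or.inl ⟨rfl, Or.inl rfl⟩)))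
      · rcases Finset.mem_union.mp hy with hyU | hyD
        · exact Or.inr (Or.inr (Or.inl ⟨hyU, Or.inl rfl⟩))
        · exact Or.inl (Or.inr (Or.inr (Or.inl ⟨rfl, Or.inr hyD⟩)))
    · rcases Finset.mem_union.mp hx with hxU | hxD
      · rcases Finset.mem_insert.mp hy with rfl | hy
        · exact Or.inl (Or.inr (Or.inl ⟨hxU, Or.inl rfl⟩))
        · rcases Finset.mem_union.mp hy with hyU | hyD
          · rcases h1.total x hxU y hyU with h | h
            · exact Or.inl (Or.inl ⟨hxU, hyU, h⟩)
            · exact Or.inr (Or.inl ⟨hyU, hxU, h⟩)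
          · exact Or.inl (Or.inr (Or.inl ⟨hxU, Or.inr hyD⟩))
      · rcases Finset.mem_insert.mp hy with rfl | hy
        · exact Or.inr (Or.inr (Or.inr (Or.inl ⟨rfl, Or.inr hxD⟩)))
        · rcases Finset.mem_union.mp hy with hyU | hyD
          · exact Or.inr (Or.inr (Or.inl ⟨hyU, Or.inr hxD⟩))
          · rcases h2.total x hxD y hyD with h | h
            · exact Or.inl (Or.inr (Or.inr (Or.inr ⟨hxD, hyD, h⟩)))
            · exact Or.inr (Or.inr (Or.inr (Or.inr ⟨hyD, hxD, h⟩)))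

end ThreeBlock

section Congr

variable {P : Type*}

lemma IsWeakOrderOn.congr {S : Finset P} {R R' : P → P → Prop}
    (h : IsWeakOrderOn S R') (hiff : ∀ x y, R x y ↔ R' x y) : IsWeakOrderOn S R := by
  constructor
  · intro x hx; exact (hiff x x).mpr (h.refl x hx)
  · intro x hx y hy z hz hxy hyz
    exact (hiff x z).mpr (h.trans x hx y hy z hz ((hiff x y).mp hxy) ((hiff y z).mp hyz))
  · intro x hx y hy
    rcases h.total x hx y hy with h' | h'
    · exact Or.inl ((hiff x y).mpr h')
    · exact Or.inr ((hiff y x).mpr h')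

lemma IsWeakOrderOn.mono {S T : Finset P} {R : P → P → Prop}
    (h : IsWeakOrderOn S R) (hTS : T ⊆ S) : IsWeakOrderOn T R :=
  ⟨fun x hx => h.refl x (hTS hx),
   fun x hx y hy z hz => h.trans x (hTS hx) y (hTS hy) z (hTS hz),
   fun x hx y hy => h.total x (hTS hx) y (hTS hy)⟩

end Congr

/-! ### The four relations as three-block relations -/

section FourRels

variable {P : Type*} [DecidableEq P] {i : P} (pr : FENPref P i)

lemma prefPlus_iff_tb : ∀ x y, pr.prefPlus x y ↔ tbRel pr.friends ∅ i pr.Rp pr.Rp x y := by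
  intro x y
  constructor
  · rintro (h | ⟨hxF, hyi⟩ | h)
    · exact Or.inl h
    · exact Or.inr (Or.inl ⟨hxF, Or.inl hyi⟩)
    · exact Or.inr (Or.inr (Or.inl ⟨h.1, Or.inl h.2⟩))
  · rintro (h | ⟨hxF, hyi | hyD⟩ | ⟨hxi, hyi | hyD⟩ | ⟨hxD, _⟩)
    · exact Or.inl h
    · exact Or.inr (Or.inl ⟨hxF, hyi⟩)
    · exact absurd hyD (Finset.notMem_empty _)
    · exact Or.inr (Or.inr ⟨hxi, hyi⟩)
    · exact absurd hyD (Finset.notMem_empty _)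
    · exact absurd hxD (Finset.notMem_empty _)

lemma prefMinus_iff_tb : ∀ x y, pr.prefMinus x y ↔ tbRel ∅ pr.enemies i pr.Rm pr.Rm x y := by
  intro x y
  constructor
  · rintro (⟨hxi, hyi⟩ | ⟨hxi, hyE⟩ | h)
    · exact Or.inr (Or.inr (Or.inl ⟨hxi, Or.inl hyi⟩))
    · exact Or.inr (Or.inr (Or.inl ⟨hxi, Or.inr hyE⟩))
    · exact Or.inr (Or.inr (Or.inr h))
  · rintro (⟨hxU, _⟩ | ⟨hxU, _⟩ | ⟨hxi, hyi | hyE⟩ | h)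
    · exact absurd hxU (Finset.notMem_empty _)
    · exact absurd hxU (Finset.notMem_empty _)
    · exact Or.inl ⟨hxi, hyi⟩
    · exact Or.inr (Or.inl ⟨hxi, hyE⟩)
    · exact Or.inr (Or.inr h)

lemma coalPlus_iff_tb (C : Finset P) : ∀ x y,
    pr.coalPlus C x y ↔
      tbRel (pr.friends ∩ C) (pr.friends \ C) i pr.Rp (fun a b => pr.Rp b a) x y := by
  intro x y
  constructor
  · rintro (⟨h1, h2, h3, h4, h5⟩ | ⟨⟨h1, h2⟩, hy⟩ | ⟨hxi, hy⟩ | ⟨h1, h2, h3, h4, h5⟩)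
    · exact Or.inl ⟨Finset.mem_inter.mpr ⟨h1, h2⟩, Finset.mem_inter.mpr ⟨h3, h4⟩, h5⟩
    · exact Or.inr (Or.inl ⟨Finset.mem_inter.mpr ⟨h1, h2⟩,
        hy.imp id (fun h => Finset.mem_sdiff.mpr h)⟩)
    · exact Or.inr (Or.inr (Or.inl ⟨hxi, hy.imp id (fun h => Finset.mem_sdiff.mpr h)⟩))
    · exact Or.inr (Or.inr (Or.inr ⟨Finset.mem_sdiff.mpr ⟨h1, h2⟩,
        Finset.mem_sdiff.mpr ⟨h3, h4⟩, h5⟩))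
  · rintro (⟨h1, h2, h3⟩ | ⟨h1, hy⟩ | ⟨hxi, hy⟩ | ⟨h1, h2, h3⟩)
    · obtain ⟨ha, hb⟩ := Finset.mem_inter.mp h1
      obtain ⟨hc, hd⟩ := Finset.mem_inter.mp h2
      exact Or.inl ⟨ha, hb, hc, hd, h3⟩
    · exact Or.inr (Or.inl ⟨Finset.mem_inter.mp h1,
        hy.imp id (fun h => Finset.mem_sdiff.mp h)⟩)
    · exact Or.inr (Or.inr (Or.inl ⟨hxi, hy.imp id (fun h => Finset.mem_sdiff.mp h)⟩))
    · obtain ⟨ha, hb⟩ := Finset.mem_sdiff.mp h1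
      obtain ⟨hc, hd⟩ := Finset.mem_sdiff.mp h2
      exact Or.inr (Or.inr (Or.inr ⟨ha, hb, hc, hd, h3⟩))

lemma coalMinus_iff_tb (C : Finset P) : ∀ x y,
    pr.coalMinus C x y ↔
      tbRel (pr.enemies ∩ C) (pr.enemies \ C) i (fun a b => pr.Rm b a) pr.Rm x y := by
  intro x y
  constructor
  · rintro (⟨h1, h2, h3, h4, h5⟩ | ⟨⟨h1, h2⟩, hy⟩ | ⟨hxi, hy⟩ | ⟨h1, h2, h3, h4, h5⟩)
    · exact Or.inl ⟨Finset.mem_inter.mpr ⟨h1, h2⟩, Finset.mem_inter.mpr ⟨h3, h4⟩, h5⟩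
    · exact Or.inr (Or.inl ⟨Finset.mem_inter.mpr ⟨h1, h2⟩,
        hy.imp id (fun h => Finset.mem_sdiff.mpr h)⟩)
    · exact Or.inr (Or.inr (Or.inl ⟨hxi, hy.imp id (fun h => Finset.mem_sdiff.mpr h)⟩))
    · exact Or.inr (Or.inr (Or.inr ⟨Finset.mem_sdiff.mpr ⟨h1, h2⟩,
        Finset.mem_sdiff.mpr ⟨h3, h4⟩, h5⟩))
  · rintro (⟨h1, h2, h3⟩ | ⟨h1, hy⟩ | ⟨hxi, hy⟩ | ⟨h1, h2, h3⟩)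
    · obtain ⟨ha, hb⟩ := Finset.mem_inter.mp h1
      obtain ⟨hc, hd⟩ := Finset.mem_inter.mp h2
      exact Or.inl ⟨ha, hb, hc, hd, h3⟩
    · exact Or.inr (Or.inl ⟨Finset.mem_inter.mp h1,
        hy.imp id (fun h => Finset.mem_sdiff.mp h)⟩)
    · exact Or.inr (Or.inr (Or.inl ⟨hxi, hy.imp id (fun h => Finset.mem_sdiff.mp h)⟩))
    · obtain ⟨ha, hb⟩ := Finset.mem_sdiff.mp h1
      obtain ⟨hc, hd⟩ := Finset.mem_sdiff.mp h2
      exact Or.inr (Or.inr (Or.inr ⟨ha, hb, hc, hd, h3⟩))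

lemma prefPlus_weak' : IsWeakOrderOn (insert i pr.friends) pr.prefPlus := by
  have h := tbRel_weak (U := pr.friends) (D := ∅) (c := i) (R1 := pr.Rp) (R2 := pr.Rp) pr.self_not_friend
    (Finset.notMem_empty i) (Finset.disjoint_empty_right _) pr.wo_p
    ⟨fun x hx => absurd hx (Finset.notMem_empty x),
     fun x hx => absurd hx (Finset.notMem_empty x),
     fun x hx => absurd hx (Finset.notMem_empty x)⟩
  rw [Finset.union_empty] at h
  exact h.congr (prefPlus_iff_tb pr)

lemma prefMinus_weak' : IsWeakOrderOn (insert i pr.enemies) pr.prefMinus := by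
  have h := tbRel_weak (U := ∅) (D := pr.enemies) (c := i) (R1 := pr.Rm) (R2 := pr.Rm) (Finset.notMem_empty i)
    pr.self_not_enemy (Finset.disjoint_empty_left _)
    ⟨fun x hx => absurd hx (Finset.notMem_empty x),
     fun x hx => absurd hx (Finset.notMem_empty x),
     fun x hx => absurd hx (Finset.notMem_empty x)⟩ pr.wo_m
  rw [Finset.empty_union] at h
  exact h.congr (prefMinus_iff_tb pr)

lemma coalPlus_weak (C : Finset P) :
    IsWeakOrderOn (insert i pr.friends) (pr.coalPlus C) := by
  have h := tbRel_weak (U := pr.friends ∩ C) (D := pr.friends \ C) (c := i)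
    (fun h => pr.self_not_friend (Finset.mem_inter.mp h).1)
    (fun h => pr.self_not_friend (Finset.mem_sdiff.mp h).1)
    (Finset.disjoint_left.mpr fun {a} ha hb =>
      (Finset.mem_sdiff.mp hb).2 (Finset.mem_inter.mp ha).2)
    (pr.wo_p.mono (Finset.inter_subset_left))
    ((pr.wo_p.swap).mono (Finset.sdiff_subset))
  rw [Finset.union_comm, Finset.sdiff_union_inter] at h
  exact h.congr (coalPlus_iff_tb pr C)

lemma coalMinus_weak (C : Finset P) :
    IsWeakOrderOn (insert i pr.enemies) (pr.coalMinus C) := by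
  have h := tbRel_weak (U := pr.enemies ∩ C) (D := pr.enemies \ C) (c := i)
    (fun h => pr.self_not_enemy (Finset.mem_inter.mp h).1)
    (fun h => pr.self_not_enemy (Finset.mem_sdiff.mp h).1)
    (Finset.disjoint_left.mpr fun {a} ha hb =>
      (Finset.mem_sdiff.mp hb).2 (Finset.mem_inter.mp ha).2)
    ((pr.wo_m.swap).mono (Finset.inter_subset_left))
    (pr.wo_m.mono (Finset.sdiff_subset))
  rw [Finset.union_comm, Finset.sdiff_union_inter] at h
  exact h.congr (coalMinus_iff_tb pr C)

end FourRels

/-! ### Strict parts and pair characterizations -/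

section Strict

variable {P : Type*}

lemma strictOf_congr {R R' : P → P → Prop} (h : ∀ a b, R a b ↔ R' a b) (x y : P) :
    strictOf R x y ↔ strictOf R' x y := by
  unfold strictOf
  rw [h x y, h y x]

lemma pairCount_congr {S : Finset P} {Q Q' : P → P → Prop}
    (h : ∀ x ∈ S, ∀ y ∈ S, Q x y ↔ Q' x y) : pairCount S Q = pairCount S Q' :=
  le_antisymm (pairCount_mono fun x hx y hy => (h x hx y hy).mp)
    (pairCount_mono fun x hx y hy => (h x hx y hy).mpr)

variable [DecidableEq P] {U D : Finset P} {c : P} {R1 R2 : P → P → Prop}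

lemma tbRel_strict_iff (hcU : c ∉ U) (hcD : c ∉ D) (hUD : Disjoint U D) (x y : P) :
    strictOf (tbRel U D c R1 R2) x y ↔
      (x ∈ U ∧ y ∈ U ∧ strictOf R1 x y) ∨
      (x ∈ U ∧ (y = c ∨ y ∈ D)) ∨
      (x = c ∧ y ∈ D) ∨
      (x ∈ D ∧ y ∈ D ∧ strictOf R2 x y) := by
  have hd : ∀ {u : P}, u ∈ U → u ∈ D → False := fun hu hv => Finset.disjoint_left.mp hUD hu hv
  constructor
  · rintro ⟨hxy, hnyx⟩
    rcases hxy with ⟨hxU, hyU, h⟩ | ⟨hxU, hy⟩ | ⟨hxc, hyc | hyD⟩ | ⟨hxD, hyD, h⟩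
    · exact Or.inl ⟨hxU, hyU, h, fun h' => hnyx (Or.inl ⟨hyU, hxU, h'⟩)⟩
    · exact Or.inr (Or.inl ⟨hxU, hy⟩)
    · exact absurd (Or.inr (Or.inr (Or.inl ⟨hyc, Or.inl hxc⟩))) hnyx
    · exact Or.inr (Or.inr (Or.inl ⟨hxc, hyD⟩))
    · exact Or.inr (Or.inr (Or.inr ⟨hxD, hyD, h, fun h' => hnyx (Or.inr (Or.inr (Or.inr
        ⟨hyD, hxD, h'⟩)))⟩))
  · rintro (⟨hxU, hyU, h⟩ | ⟨hxU, hy⟩ | ⟨hxc, hyD⟩ | ⟨hxD, hyD, h⟩)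
    · refine ⟨Or.inl ⟨hxU, hyU, h.1⟩, ?_⟩
      rintro (⟨hyU', hxU', h'⟩ | ⟨hyU', hxc | hxD⟩ | ⟨hyc, _⟩ | ⟨hyD, _, _⟩)
      · exact h.2 h'
      · exact hcU (hxc ▸ hxU)
      · exact hd hxU hxD
      · exact hcU (hyc ▸ hyU)
      · exact hd hyU hyD
    · refine ⟨Or.inr (Or.inl ⟨hxU, hy⟩), ?_⟩
      rcases hy with hyc | hyD
      · rintro (⟨hyU', _⟩ | ⟨hyU', _⟩ | ⟨_, hxc | hxD⟩ | ⟨hyD, _, _⟩)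
        · exact hcU (hyc ▸ hyU')
        · exact hcU (hyc ▸ hyU')
        · exact hcU (hxc ▸ hxU)
        · exact hd hxU hxD
        · exact hcD (hyc ▸ hyD)
      · rintro (⟨hyU', _⟩ | ⟨hyU', _⟩ | ⟨hyc, hxc | hxD⟩ | ⟨_, hxD, _⟩)
        · exact hd hyU' hyD
        · exact hd hyU' hyD
        · exact hcD (hyc ▸ hyD)
        · exact hcD (hyc ▸ hyD)
        · exact hd hxU hxD
    · refine ⟨Or.inr (Or.inr (Or.inl ⟨hxc, Or.inr hyD⟩)), ?_⟩
      rintro (⟨hyU', _⟩ | ⟨hyU', _⟩ | ⟨hyc, _⟩ | ⟨_, hxD, _⟩)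
      · exact hd hyU' hyD
      · exact hd hyU' hyD
      · exact hcD (hyc ▸ hyD)
      · exact hcD (hxc ▸ hxD)
    · refine ⟨Or.inr (Or.inr (Or.inr ⟨hxD, hyD, h.1⟩)), ?_⟩
      rintro (⟨hyU', _⟩ | ⟨hyU', _⟩ | ⟨hyc, _⟩ | ⟨_, _, h'⟩)
      · exact hd hyU' hyD
      · exact hd hyU' hyD
      · exact hcD (hyc ▸ hyD)
      · exact h.2 h'

end Strict

/-! ### Pair characterizations for the game relations -/

section Pairs

variable {P : Type*} [DecidableEq P] {i : P} (pr : FENPref P i)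

lemma strict_prefPlus_iff (a b : P) :
    strictOf pr.prefPlus a b ↔
      (a ∈ pr.friends ∧ b ∈ pr.friends ∧ strictOf pr.Rp a b) ∨ (a ∈ pr.friends ∧ b = i) := by
  rw [strictOf_congr (prefPlus_iff_tb pr) a b,
    tbRel_strict_iff pr.self_not_friend (Finset.notMem_empty i)
      (Finset.disjoint_empty_right _) a b]
  constructor
  · rintro (h | ⟨h1, h2 | h2⟩ | ⟨_, h2⟩ | ⟨h1, _⟩)
    · exact Or.inl h
    · exact Or.inr ⟨h1, h2⟩
    · exact absurd h2 (Finset.notMem_empty _)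
    · exact absurd h2 (Finset.notMem_empty _)
    · exact absurd h1 (Finset.notMem_empty _)
  · rintro (h | ⟨h1, h2⟩)
    · exact Or.inl h
    · exact Or.inr (Or.inl ⟨h1, Or.inl h2⟩)

lemma strict_prefMinus_iff (a b : P) :
    strictOf pr.prefMinus a b ↔
      (a = i ∧ b ∈ pr.enemies) ∨ (a ∈ pr.enemies ∧ b ∈ pr.enemies ∧ strictOf pr.Rm a b) := by
  rw [strictOf_congr (prefMinus_iff_tb pr) a b,
    tbRel_strict_iff (Finset.notMem_empty i) pr.self_not_enemy
      (Finset.disjoint_empty_left _) a b]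
  constructor
  · rintro (⟨h1, _⟩ | ⟨h1, _⟩ | h | h)
    · exact absurd h1 (Finset.notMem_empty _)
    · exact absurd h1 (Finset.notMem_empty _)
    · exact Or.inl h
    · exact Or.inr h
  · rintro (h | h)
    · exact Or.inr (Or.inr (Or.inl h))
    · exact Or.inr (Or.inr (Or.inr h))

lemma strict_coalPlus_iff (C : Finset P) (a b : P) :
    strictOf (pr.coalPlus C) a b ↔
      (a ∈ pr.friends ∩ C ∧ b ∈ pr.friends ∩ C ∧ strictOf pr.Rp a b) ∨
      (a ∈ pr.friends ∩ C ∧ (b = i ∨ b ∈ pr.friends \ C)) ∨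
      (a = i ∧ b ∈ pr.friends \ C) ∨
      (a ∈ pr.friends \ C ∧ b ∈ pr.friends \ C ∧ strictOf (fun u v => pr.Rp v u) a b) := by
  rw [strictOf_congr (coalPlus_iff_tb pr C) a b,
    tbRel_strict_iff (fun h => pr.self_not_friend (Finset.mem_inter.mp h).1)
      (fun h => pr.self_not_friend (Finset.mem_sdiff.mp h).1)
      (Finset.disjoint_left.mpr fun {u} hu hv =>
        (Finset.mem_sdiff.mp hv).2 (Finset.mem_inter.mp hu).2) a b]

lemma strict_coalMinus_iff (C : Finset P) (a b : P) :
    strictOf (pr.coalMinus C) a b ↔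
      (a ∈ pr.enemies ∩ C ∧ b ∈ pr.enemies ∩ C ∧ strictOf (fun u v => pr.Rm v u) a b) ∨
      (a ∈ pr.enemies ∩ C ∧ (b = i ∨ b ∈ pr.enemies \ C)) ∨
      (a = i ∧ b ∈ pr.enemies \ C) ∨
      (a ∈ pr.enemies \ C ∧ b ∈ pr.enemies \ C ∧ strictOf pr.Rm a b) := by
  rw [strictOf_congr (coalMinus_iff_tb pr C) a b,
    tbRel_strict_iff (fun h => pr.self_not_enemy (Finset.mem_inter.mp h).1)
      (fun h => pr.self_not_enemy (Finset.mem_sdiff.mp h).1)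
      (Finset.disjoint_left.mpr fun {u} hu hv =>
        (Finset.mem_sdiff.mp hv).2 (Finset.mem_inter.mp hu).2) a b]

/-- The pairs contributing to `δ⁺`. -/
lemma plus_pair_iff (C : Finset P) (a b : P) :
    (strictOf pr.prefPlus a b ∧ ¬ strictOf (pr.coalPlus C) a b) ↔
      (a ∈ pr.friends ∧ a ∉ C ∧ (b = i ∨ (b ∈ pr.friends ∧ strictOf pr.Rp a b))) := by
  have hiF := pr.self_not_friend
  rw [strict_prefPlus_iff, strict_coalPlus_iff]
  constructor
  · rintro ⟨⟨haF, hbF, hs⟩ | ⟨haF, hbi⟩, hns⟩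
    · refine ⟨haF, fun haC => ?_, Or.inr ⟨hbF, hs⟩⟩
      by_cases hbC : b ∈ C
      · exact hns (Or.inl ⟨Finset.mem_inter.mpr ⟨haF, haC⟩, Finset.mem_inter.mpr ⟨hbF, hbC⟩, hs⟩)
      · exact hns (Or.inr (Or.inl ⟨Finset.mem_inter.mpr ⟨haF, haC⟩,
          Or.inr (Finset.mem_sdiff.mpr ⟨hbF, hbC⟩)⟩))
    · refine ⟨haF, fun haC => ?_, Or.inl hbi⟩
      exact hns (Or.inr (Or.inl ⟨Finset.mem_inter.mpr ⟨haF, haC⟩, Or.inl hbi⟩))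
  · rintro ⟨haF, haC, hcase⟩
    have hane : a ≠ i := fun h => hiF (h ▸ haF)
    rcases hcase with hbi | ⟨hbF, hs⟩
    · refine ⟨Or.inr ⟨haF, hbi⟩, ?_⟩
      rintro (⟨h1, _, _⟩ | ⟨h1, _⟩ | ⟨h1, _⟩ | ⟨_, h2, _⟩)
      · exact haC (Finset.mem_inter.mp h1).2
      · exact haC (Finset.mem_inter.mp h1).2
      · exact hane h1
      · exact hiF (hbi ▸ (Finset.mem_sdiff.mp h2).1)
    · refine ⟨Or.inl ⟨haF, hbF, hs⟩, ?_⟩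
      rintro (⟨h1, _, _⟩ | ⟨h1, _⟩ | ⟨h1, _⟩ | ⟨_, _, h3⟩)
      · exact haC (Finset.mem_inter.mp h1).2
      · exact haC (Finset.mem_inter.mp h1).2
      · exact hane h1
      · exact hs.2 h3.1

/-- The pairs contributing to `δ⁻`. -/
lemma minus_pair_iff (C : Finset P) (a b : P) :
    (strictOf pr.prefMinus a b ∧ ¬ strictOf (pr.coalMinus C) a b) ↔
      (b ∈ pr.enemies ∧ b ∈ C ∧ (a = i ∨ (a ∈ pr.enemies ∧ strictOf pr.Rm a b))) := by
  have hiE := pr.self_not_enemy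
  rw [strict_prefMinus_iff, strict_coalMinus_iff]
  constructor
  · rintro ⟨⟨hai, hbE⟩ | ⟨haE, hbE, hs⟩, hns⟩
    · refine ⟨hbE, ?_, Or.inl hai⟩
      by_contra hbC
      exact hns (Or.inr (Or.inr (Or.inl ⟨hai, Finset.mem_sdiff.mpr ⟨hbE, hbC⟩⟩)))
    · refine ⟨hbE, ?_, Or.inr ⟨haE, hs⟩⟩
      by_contra hbC
      by_cases haC : a ∈ C
      · exact hns (Or.inr (Or.inl ⟨Finset.mem_inter.mpr ⟨haE, haC⟩,
          Or.inr (Finset.mem_sdiff.mpr ⟨hbE, hbC⟩)⟩))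
      · exact hns (Or.inr (Or.inr (Or.inr ⟨Finset.mem_sdiff.mpr ⟨haE, haC⟩,
          Finset.mem_sdiff.mpr ⟨hbE, hbC⟩, hs⟩)))
  · rintro ⟨hbE, hbC, hcase⟩
    rcases hcase with hai | ⟨haE, hs⟩
    · refine ⟨Or.inl ⟨hai, hbE⟩, ?_⟩
      rintro (⟨h1, _, _⟩ | ⟨h1, _⟩ | ⟨_, h2⟩ | ⟨h1, _, _⟩)
      · exact hiE (hai ▸ (Finset.mem_inter.mp h1).1)
      · exact hiE (hai ▸ (Finset.mem_inter.mp h1).1)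
      · exact (Finset.mem_sdiff.mp h2).2 hbC
      · exact hiE (hai ▸ (Finset.mem_sdiff.mp h1).1)
  
    · have hane : a ≠ i := fun h => hiE (h ▸ haE)
      refine ⟨Or.inr ⟨haE, hbE, hs⟩, ?_⟩
      rintro (⟨_, _, h3⟩ | ⟨h1, hb | hb⟩ | ⟨h1, _⟩ | ⟨_, h2, _⟩)
      · exact hs.2 h3.1
      · exact hiE (hb ▸ hbE)
      · exact (Finset.mem_sdiff.mp hb).2 hbC
      · exact hane h1
      · exact (Finset.mem_sdiff.mp h2).2 hbC

end Pairs

/-! ### Counting: δ⁺ and δ⁻ as weighted sums -/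

section Counting

variable {P : Type*} [DecidableEq P] {i : P} (pr : FENPref P i)

/-- The cost of missing friend `x`: one plus the number of friends strictly below `x`. -/
noncomputable def wP (pr : FENPref P i) (x : P) : ℕ :=
  1 + Set.ncard {y | y ∈ pr.friends ∧ strictOf pr.Rp x y}

/-- The cost of including enemy `y`: one plus the number of enemies strictly above `y`. -/
noncomputable def vM (pr : FENPref P i) (y : P) : ℕ :=
  1 + Set.ncard {x | x ∈ pr.enemies ∧ strictOf pr.Rm x y}

lemma plus_count (C : Finset P) :
    pairCount (insert i pr.friends)
      (fun x y => strictOf pr.prefPlus x y ∧ ¬ strictOf (pr.coalPlus C) x y)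
    = ∑ x ∈ pr.friends \ C, wP pr x := by
  classical
  rw [pairCount_congr (fun a _ b _ => plus_pair_iff pr C a b), pairCount]
  have hset : {p : P × P | p.1 ∈ insert i pr.friends ∧ p.2 ∈ insert i pr.friends ∧
      (p.1 ∈ pr.friends ∧ p.1 ∉ C ∧ (p.2 = i ∨ (p.2 ∈ pr.friends ∧ strictOf pr.Rp p.1 p.2)))} =
      ↑((pr.friends \ C).biUnion (fun x =>
        (insert i (pr.friends.filter fun y => strictOf pr.Rp x y)).image (fun y => (x, y)))) := by
    ext ⟨a, b⟩
    simp only [Set.mem_setOf_eq, Finset.coe_biUnion, Set.mem_iUnion, Finset.mem_coe,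
      Finset.mem_image, Finset.mem_insert, Finset.mem_filter, Finset.mem_sdiff, Prod.mk.injEq]
    constructor
    · rintro ⟨_, _, haF, haC, hcase⟩
      exact ⟨a, ⟨haF, haC⟩, b, by rcases hcase with h | h; exacts [Or.inl h, Or.inr h], rfl, rfl⟩
    · rintro ⟨x, ⟨hxF, hxC⟩, y, hy, rfl, rfl⟩
      refine ⟨Or.inr hxF, ?_, hxF, hxC, ?_⟩
      · rcases hy with rfl | ⟨hyF, _⟩
        · exact Or.inl rfl
        · exact Or.inr hyF
      · rcases hy with rfl | h
        · exact Or.inl rfl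
        · exact Or.inr h
  rw [hset, Set.ncard_coe_finset, Finset.card_biUnion]
  · apply Finset.sum_congr rfl
    intro x hx
    rw [Finset.card_image_of_injective _ (fun u v huv => congrArg Prod.snd huv),
      Finset.card_insert_of_notMem (fun h => pr.self_not_friend (Finset.mem_filter.mp h).1),
      wP, add_comm]
    congr 1
    rw [← Set.ncard_coe_finset]
    congr 1
    ext y
    simp [Finset.mem_filter]
  · intro x hx y hy hxy
    apply Finset.disjoint_left.mpr
    rintro ⟨u, v⟩ h1 h2
    rw [Finset.mem_image] at h1 h2
    obtain ⟨_, _, h1⟩ := h1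
    obtain ⟨_, _, h2⟩ := h2
    exact hxy ((congrArg Prod.fst h1).trans (congrArg Prod.fst h2).symm)

lemma minus_count (C : Finset P) :
    pairCount (insert i pr.enemies)
      (fun x y => strictOf pr.prefMinus x y ∧ ¬ strictOf (pr.coalMinus C) x y)
    = ∑ y ∈ pr.enemies ∩ C, vM pr y := by
  classical
  rw [pairCount_congr (fun a _ b _ => minus_pair_iff pr C a b), pairCount]
  have hset : {p : P × P | p.1 ∈ insert i pr.enemies ∧ p.2 ∈ insert i pr.enemies ∧
      (p.2 ∈ pr.enemies ∧ p.2 ∈ C ∧ (p.1 = i ∨ (p.1 ∈ pr.enemies ∧ strictOf pr.Rm p.1 p.2)))} =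
      ↑((pr.enemies ∩ C).biUnion (fun y =>
        (insert i (pr.enemies.filter fun x => strictOf pr.Rm x y)).image (fun x => (x, y)))) := by
    ext ⟨a, b⟩
    simp only [Set.mem_setOf_eq, Finset.coe_biUnion, Set.mem_iUnion, Finset.mem_coe,
      Finset.mem_image, Finset.mem_insert, Finset.mem_filter, Finset.mem_inter, Prod.mk.injEq]
    constructor
    · rintro ⟨_, _, hbE, hbC, hcase⟩
      exact ⟨b, ⟨hbE, hbC⟩, a, by rcases hcase with h | h; exacts [Or.inl h, Or.inr h], rfl, rfl⟩
    · rintro ⟨y, ⟨hyE, hyC⟩, x, hx, rfl, rfl⟩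
      refine ⟨?_, Or.inr hyE, hyE, hyC, ?_⟩
      · rcases hx with rfl | ⟨hxE, _⟩
        · exact Or.inl rfl
        · exact Or.inr hxE
      · rcases hx with rfl | h
        · exact Or.inl rfl
        · exact Or.inr h
  rw [hset, Set.ncard_coe_finset, Finset.card_biUnion]
  · apply Finset.sum_congr rfl
    intro y hy
    rw [Finset.card_image_of_injective _ (fun u v huv => congrArg Prod.fst huv),
      Finset.card_insert_of_notMem (fun h => pr.self_not_enemy (Finset.mem_filter.mp h).1),
      vM, add_comm]
    congr 1
    rw [← Set.ncard_coe_finset]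
    congr 1
    ext x
    simp [Finset.mem_filter]
  · intro x hx y hy hxy
    apply Finset.disjoint_left.mpr
    rintro ⟨u, v⟩ h1 h2
    rw [Finset.mem_image] at h1 h2
    obtain ⟨_, _, h1⟩ := h1
    obtain ⟨_, _, h2⟩ := h2
    exact hxy ((congrArg Prod.snd h1).trans (congrArg Prod.snd h2).symm)

lemma wP_mono {a b : P} (haF : a ∈ pr.friends) (hbF : b ∈ pr.friends) (h : pr.Rp a b) :
    wP pr b ≤ wP pr a := by
  unfold wP
  apply Nat.add_le_add_left
  apply Set.ncard_le_ncard _ (Set.Finite.subset pr.friends.finite_toSet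
    (fun y hy => hy.1))
  rintro y ⟨hyF, hs⟩
  refine ⟨hyF, pr.wo_p.trans a haF b hbF y hyF h hs.1,
    fun hya => hs.2 (pr.wo_p.trans y hyF a haF b hbF hya h)⟩

lemma vM_mono {a b : P} (haE : a ∈ pr.enemies) (hbE : b ∈ pr.enemies) (h : pr.Rm a b) :
    vM pr a ≤ vM pr b := by
  unfold vM
  apply Nat.add_le_add_left
  apply Set.ncard_le_ncard _ (Set.Finite.subset pr.enemies.finite_toSet
    (fun x hx => hx.1))
  rintro x ⟨hxE, hs⟩
  refine ⟨hxE, pr.wo_m.trans x hxE a haE b hbE hs.1 h,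
    fun hbx => hs.2 (pr.wo_m.trans a haE b hbE x hxE h hbx)⟩

end Counting


/-- Compatibility with the polarized responsive extension principle: if `A ⪰^{+0−}_i B`,
witnessed by injections `φ : B ∩ N⁺_i → A ∩ N⁺_i` with `φ(j) ⊵_i j` and
`ψ : A ∩ N⁻_i → B ∩ N⁻_i` with `k ⊵_i ψ(k)`, then `δ(⊵_i, A) ≤ δ(⊵_i, B)`,
i.e. `A ⪰_i B`. -/
theorem compatible_with_polarized_responsive {P : Type*} [DecidableEq P] {i : P}
    (pr : FENPref P i) (A B : Finset P) (hiA : i ∈ A) (hiB : i ∈ B)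
    (φ : P → P)
    (hφmaps : ∀ j ∈ B ∩ pr.friends, φ j ∈ A ∩ pr.friends)
    (hφinj : Set.InjOn φ ↑(B ∩ pr.friends))
    (hφpref : ∀ j ∈ B ∩ pr.friends, pr.Rp (φ j) j)
    (ψ : P → P)
    (hψmaps : ∀ k ∈ A ∩ pr.enemies, ψ k ∈ B ∩ pr.enemies)
    (hψinj : Set.InjOn ψ ↑(A ∩ pr.enemies))
    (hψpref : ∀ k ∈ A ∩ pr.enemies, pr.Rm k (ψ k)) :
    pr.delta A ≤ pr.delta B := by
  unfold FENPref.delta FENPref.deltaPlus FENPref.deltaMinus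
  rw [dirTau_eq (prefPlus_weak' pr) (coalPlus_weak pr A),
    dirTau_eq (prefPlus_weak' pr) (coalPlus_weak pr B),
    dirTau_eq (prefMinus_weak' pr) (coalMinus_weak pr A),
    dirTau_eq (prefMinus_weak' pr) (coalMinus_weak pr B),
    plus_count pr A, plus_count pr B, minus_count pr A, minus_count pr B]
  have hplus : ∑ x ∈ pr.friends \ A, wP pr x ≤ ∑ x ∈ pr.friends \ B, wP pr x := by
    have key : ∑ x ∈ pr.friends ∩ B, wP pr x ≤ ∑ x ∈ pr.friends ∩ A, wP pr x := by
      rw [Finset.inter_comm pr.friends B]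
      calc ∑ j ∈ B ∩ pr.friends, wP pr j
          ≤ ∑ j ∈ B ∩ pr.friends, wP pr (φ j) := by
            apply Finset.sum_le_sum
            intro j hj
            exact wP_mono pr (Finset.mem_inter.mp (hφmaps j hj)).2
              (Finset.mem_inter.mp hj).2 (hφpref j hj)
        _ = ∑ x ∈ (B ∩ pr.friends).image φ, wP pr x := by
            rw [Finset.sum_image (fun x hx y hy h => hφinj (Finset.mem_coe.mpr hx)
              (Finset.mem_coe.mpr hy) h)]
        _ ≤ ∑ x ∈ pr.friends ∩ A, wP pr x := by
            apply Finset.sum_le_sum_of_subset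
            intro u hu
            rw [Finset.mem_image] at hu
            obtain ⟨j, hj, rfl⟩ := hu
            have := Finset.mem_inter.mp (hφmaps j hj)
            exact Finset.mem_inter.mpr ⟨this.2, this.1⟩
    have hA : ∑ x ∈ pr.friends \ A, wP pr x + ∑ x ∈ pr.friends ∩ A, wP pr x
        = ∑ x ∈ pr.friends, wP pr x := by
      rw [← Finset.sum_union (Finset.disjoint_sdiff_inter _ _), Finset.sdiff_union_inter]
    have hB : ∑ x ∈ pr.friends \ B, wP pr x + ∑ x ∈ pr.friends ∩ B, wP pr x
        = ∑ x ∈ pr.friends, wP pr x := by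
      rw [← Finset.sum_union (Finset.disjoint_sdiff_inter _ _), Finset.sdiff_union_inter]
    omega
  have hminus : ∑ y ∈ pr.enemies ∩ A, vM pr y ≤ ∑ y ∈ pr.enemies ∩ B, vM pr y := by
    rw [Finset.inter_comm pr.enemies A]
    calc ∑ k ∈ A ∩ pr.enemies, vM pr k
        ≤ ∑ k ∈ A ∩ pr.enemies, vM pr (ψ k) := by
          apply Finset.sum_le_sum
          intro k hk
          exact vM_mono pr (Finset.mem_inter.mp hk).2
            (Finset.mem_inter.mp (hψmaps k hk)).2 (hψpref k hk)
      _ = ∑ y ∈ (A ∩ pr.enemies).image ψ, vM pr y := by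
          rw [Finset.sum_image (fun x hx y hy h => hψinj (Finset.mem_coe.mpr hx)
            (Finset.mem_coe.mpr hy) h)]
      _ ≤ ∑ y ∈ pr.enemies ∩ B, vM pr y := by
          apply Finset.sum_le_sum_of_subset
          intro u hu
          rw [Finset.mem_image] at hu
          obtain ⟨k, hk, rfl⟩ := hu
          have := Finset.mem_inter.mp (hψmaps k hk)
          exact Finset.mem_inter.mpr ⟨this.2, this.1⟩
  exact Nat.add_le_add hplus hminus
end

section
/- For every player i and every coalition C containing i, the directed Hausdorff–Kendall-tau distance from the preference to the coalition never exceeds the reverse direction: →τ(⊵⁺_i, C⁺_i) ≤ →τ(C⁺_i, ⊵⁺_i). -/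
section AuxProof

variable {P : Type*}

lemma linExt_asymm {S : Finset P} {R A : P → P → Prop} (hA : IsLinExtOn S R A)
    {x y : P} (hx : x ∈ S) (hy : y ∈ S) (h1 : A x y) (h2 : A y x) : False :=
  hA.irrefl x hx (hA.trans x hx y hy x hx h1 h2)

/-- Every reflexive transitive relation on a finite set admits a linear extension. -/
lemma exists_linExtOn {S : Finset P} {R : P → P → Prop}
    (hrefl : ∀ x ∈ S, R x x)
    (htrans : ∀ x ∈ S, ∀ y ∈ S, ∀ z ∈ S, R x y → R y z → R x z) :
    ∃ A, IsLinExtOn S R A := by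
  classical
  set f : P → ℕ := fun x => Set.ncard {z | z ∈ S ∧ R z x} with hfdef
  have hmono : ∀ x ∈ S, ∀ y ∈ S, strictOf R x y → f x < f y := by
    intro x hx y hy h
    have hfin : ({z | z ∈ S ∧ R z y} : Set P).Finite :=
      S.finite_toSet.subset (fun z hz => hz.1)
    refine Set.ncard_lt_ncard ?_ hfin
    rw [Set.ssubset_def]
    constructor
    · intro z hz
      exact ⟨hz.1, htrans z hz.1 x hx y hy hz.2 h.1⟩
    · intro hsub
      exact h.2 (hsub ⟨hy, hrefl y hy⟩).2
  refine ⟨fun x y => f x < f y ∨ (f x = f y ∧ WellOrderingRel x y), ?_, ?_, ?_, ?_⟩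
  · intro x _ h
    rcases h with h | ⟨-, h⟩
    · exact lt_irrefl _ h
    · exact irrefl_of WellOrderingRel x h
  · intro x _ y _ z _ hxy hyz
    rcases hxy with h1 | ⟨e1, w1⟩ <;> rcases hyz with h2 | ⟨e2, w2⟩
    · exact Or.inl (h1.trans h2)
    · exact Or.inl (by omega)
    · exact Or.inl (by omega)
    · exact Or.inr ⟨e1.trans e2, trans_of WellOrderingRel w1 w2⟩
  · intro x _ y _ hxy
    rcases lt_trichotomy (f x) (f y) with h | h | h
    · exact Or.inl (Or.inl h)
    · rcases trichotomous_of WellOrderingRel x y with w | w | w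
      · exact Or.inl (Or.inr ⟨h, w⟩)
      · exact absurd w hxy
      · exact Or.inr (Or.inr ⟨h.symm, w⟩)
    · exact Or.inr (Or.inl h)
  · intro x hx y hy h
    exact Or.inl (hmono x hx y hy h)

variable [DecidableEq P] {i : P}

lemma prefPlus_wo (pr : FENPref P i) : IsWeakOrderOn (insert i pr.friends) pr.prefPlus := by
  have hiF : i ∉ pr.friends := pr.self_not_friend
  constructor
  · intro x hx
    rcases Finset.mem_insert.mp hx with rfl | hxF
    · exact Or.inr (Or.inr ⟨rfl, rfl⟩)
    · exact Or.inl ⟨hxF, hxF, pr.wo_p.refl x hxF⟩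
  · intro x hx y hy z hz hxy hyz
    rcases hxy with ⟨hxF, hyF, hR1⟩ | ⟨hxF, rfl⟩ | ⟨rfl, rfl⟩
    · rcases hyz with ⟨_, hzF, hR2⟩ | ⟨_, rfl⟩ | ⟨rfl, _⟩
      · exact Or.inl ⟨hxF, hzF, pr.wo_p.trans x hxF y hyF z hzF hR1 hR2⟩
      · exact Or.inr (Or.inl ⟨hxF, rfl⟩)
      · exact absurd hyF hiF
    · rcases hyz with ⟨hyF, _, _⟩ | ⟨hyF, rfl⟩ | ⟨_, rfl⟩
      · exact absurd hyF hiF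
      · exact absurd hyF hiF
      · exact Or.inr (Or.inl ⟨hxF, rfl⟩)
    · rcases hyz with ⟨hyF, _, _⟩ | ⟨hyF, rfl⟩ | ⟨_, rfl⟩
      · exact absurd hyF hiF
      · exact absurd hyF hiF
      · exact Or.inr (Or.inr ⟨rfl, rfl⟩)
  · intro x hx y hy
    rcases Finset.mem_insert.mp hx with rfl | hxF
    · rcases Finset.mem_insert.mp hy with rfl | hyF
      · exact Or.inl (Or.inr (Or.inr ⟨rfl, rfl⟩))
      · exact Or.inr (Or.inr (Or.inl ⟨hyF, rfl⟩))
    · rcases Finset.mem_insert.mp hy with rfl | hyF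
      · exact Or.inl (Or.inr (Or.inl ⟨hxF, rfl⟩))
      · rcases pr.wo_p.total x hxF y hyF with h | h
        · exact Or.inl (Or.inl ⟨hxF, hyF, h⟩)
        · exact Or.inr (Or.inl ⟨hyF, hxF, h⟩)

lemma coalPlus_wo (pr : FENPref P i) (C : Finset P) :
    IsWeakOrderOn (insert i pr.friends) (pr.coalPlus C) := by
  have hiF : i ∉ pr.friends := pr.self_not_friend
  constructor
  · intro x hx
    rcases Finset.mem_insert.mp hx with rfl | hxF
    · exact Or.inr (Or.inr (Or.inl ⟨rfl, Or.inl rfl⟩))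
    · by_cases hxC : x ∈ C
      · exact Or.inl ⟨hxF, hxC, hxF, hxC, pr.wo_p.refl x hxF⟩
      · exact Or.inr (Or.inr (Or.inr ⟨hxF, hxC, hxF, hxC, pr.wo_p.refl x hxF⟩))
  · intro x hx y hy z hz hxy hyz
    rcases hxy with ⟨hxF, hxC, hyF, hyC, hR1⟩ | ⟨⟨hxF, hxC⟩, hy2⟩ | ⟨rfl, hy2⟩ |
      ⟨hxF, hxC, hyF, hyC, hR1⟩
    · rcases hyz with ⟨_, _, hzF, hzC, hR2⟩ | ⟨_, hz2⟩ | ⟨rfl, _⟩ | ⟨_, hyC', _⟩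
      · exact Or.inl ⟨hxF, hxC, hzF, hzC, pr.wo_p.trans x hxF y hyF z hzF hR1 hR2⟩
      · exact Or.inr (Or.inl ⟨⟨hxF, hxC⟩, hz2⟩)
      · exact absurd hyF hiF
      · exact absurd hyC hyC'
    · rcases hy2 with rfl | ⟨hyF, hyC⟩
      · rcases hyz with ⟨hyF', _⟩ | ⟨⟨hyF', _⟩, _⟩ | ⟨_, hz2⟩ | ⟨hyF', _⟩
        · exact absurd hyF' hiF
        · exact absurd hyF' hiF
        · exact Or.inr (Or.inl ⟨⟨hxF, hxC⟩, hz2⟩)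
        · exact absurd hyF' hiF
      · rcases hyz with ⟨_, hyC', _⟩ | ⟨⟨_, hyC'⟩, _⟩ | ⟨rfl, _⟩ | ⟨_, _, hzF, hzC, _⟩
        · exact absurd hyC' hyC
        · exact absurd hyC' hyC
        · exact absurd hyF hiF
        · exact Or.inr (Or.inl ⟨⟨hxF, hxC⟩, Or.inr ⟨hzF, hzC⟩⟩)
    · rcases hy2 with rfl | ⟨hyF, hyC⟩
      · rcases hyz with ⟨hyF', _⟩ | ⟨⟨hyF', _⟩, _⟩ | ⟨_, hz2⟩ | ⟨hyF', _⟩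
        · exact absurd hyF' hiF
        · exact absurd hyF' hiF
        · exact Or.inr (Or.inr (Or.inl ⟨rfl, hz2⟩))
        · exact absurd hyF' hiF
      · rcases hyz with ⟨_, hyC', _⟩ | ⟨⟨_, hyC'⟩, _⟩ | ⟨rfl, _⟩ | ⟨_, _, hzF, hzC, _⟩
        · exact absurd hyC' hyC
        · exact absurd hyC' hyC
        · exact absurd hyF hiF
        · exact Or.inr (Or.inr (Or.inl ⟨rfl, Or.inr ⟨hzF, hzC⟩⟩))
    · rcases hyz with ⟨_, hyC', _⟩ | ⟨⟨_, hyC'⟩, _⟩ | ⟨rfl, _⟩ | ⟨_, _, hzF, hzC, hR2⟩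
      · exact absurd hyC' hyC
      · exact absurd hyC' hyC
      · exact absurd hyF hiF
      · exact Or.inr (Or.inr (Or.inr
          ⟨hxF, hxC, hzF, hzC, pr.wo_p.trans z hzF y hyF x hxF hR2 hR1⟩))
  · intro x hx y hy
    rcases Finset.mem_insert.mp hx with rfl | hxF
    · rcases Finset.mem_insert.mp hy with rfl | hyF
      · exact Or.inl (Or.inr (Or.inr (Or.inl ⟨rfl, Or.inl rfl⟩)))
      · by_cases hyC : y ∈ C
        · exact Or.inr (Or.inr (Or.inl ⟨⟨hyF, hyC⟩, Or.inl rfl⟩))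
        · exact Or.inl (Or.inr (Or.inr (Or.inl ⟨rfl, Or.inr ⟨hyF, hyC⟩⟩)))
    · rcases Finset.mem_insert.mp hy with rfl | hyF
      · by_cases hxC : x ∈ C
        · exact Or.inl (Or.inr (Or.inl ⟨⟨hxF, hxC⟩, Or.inl rfl⟩))
        · exact Or.inr (Or.inr (Or.inr (Or.inl ⟨rfl, Or.inr ⟨hxF, hxC⟩⟩)))
      · by_cases hxC : x ∈ C <;> by_cases hyC : y ∈ C
        · rcases pr.wo_p.total x hxF y hyF with h | h
          · exact Or.inl (Or.inl ⟨hxF, hxC, hyF, hyC, h⟩)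
          · exact Or.inr (Or.inl ⟨hyF, hyC, hxF, hxC, h⟩)
        · exact Or.inl (Or.inr (Or.inl ⟨⟨hxF, hxC⟩, Or.inr ⟨hyF, hyC⟩⟩))
        · exact Or.inr (Or.inr (Or.inl ⟨⟨hyF, hyC⟩, Or.inr ⟨hxF, hxC⟩⟩))
        · rcases pr.wo_p.total x hxF y hyF with h | h
          · exact Or.inr (Or.inr (Or.inr (Or.inr ⟨hyF, hyC, hxF, hxC, h⟩)))
          · exact Or.inl (Or.inr (Or.inr (Or.inr ⟨hxF, hxC, hyF, hyC, h⟩)))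

/-- A pair strictly ordered by the preference is never tied in the coalition order. -/
lemma key_no_tie (pr : FENPref P i) (C : Finset P) {x y : P}
    (hs : strictOf pr.prefPlus x y) (h1 : pr.coalPlus C x y) (h2 : pr.coalPlus C y x) :
    False := by
  have hiF : i ∉ pr.friends := pr.self_not_friend
  rcases h1 with ⟨hxF, hxC, hyF, hyC, hR1⟩ | ⟨⟨hxF, hxC⟩, hy2⟩ | ⟨rfl, hy2⟩ |
    ⟨hxF, hxC, hyF, hyC, hR1⟩
  · rcases h2 with ⟨_, _, _, _, hR2⟩ | ⟨_, h2'⟩ | ⟨heq, _⟩ | ⟨_, hyC', _⟩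
    · exact hs.2 (Or.inl ⟨hyF, hxF, hR2⟩)
    · rcases h2' with rfl | ⟨_, hxC'⟩
      · exact hiF hxF
      · exact hxC' hxC
    · exact hiF (heq ▸ hyF)
    · exact hyC' hyC
  · rcases hy2 with rfl | ⟨hyF, hyC⟩
    · rcases h2 with ⟨hyF', _⟩ | ⟨⟨hyF', _⟩, _⟩ | ⟨_, h2'⟩ | ⟨hyF', _⟩
      · exact hiF hyF'
      · exact hiF hyF'
      · rcases h2' with rfl | ⟨_, hxC'⟩
        · exact hiF hxF
        · exact hxC' hxC
      · exact hiF hyF'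
    · rcases h2 with ⟨_, hyC', _⟩ | ⟨⟨_, hyC'⟩, _⟩ | ⟨heq, _⟩ | ⟨_, _, _, hxC', _⟩
      · exact hyC hyC'
      · exact hyC hyC'
      · exact hiF (heq ▸ hyF)
      · exact hxC' hxC
  · rcases hy2 with rfl | ⟨hyF, hyC⟩
    · exact hs.2 hs.1
    · rcases h2 with ⟨_, hyC', _⟩ | ⟨⟨_, hyC'⟩, _⟩ | ⟨heq, _⟩ | ⟨_, _, hxF', _⟩
      · exact hyC hyC'
      · exact hyC hyC'
      · exact hiF (heq ▸ hyF)
      · exact hiF hxF'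
  · rcases h2 with ⟨_, hyC', _⟩ | ⟨⟨_, hyC'⟩, _⟩ | ⟨heq, _⟩ | ⟨_, _, _, _, _⟩
    · exact hyC hyC'
    · exact hyC hyC'
    · exact hiF (heq ▸ hyF)
    · exact hs.2 (Or.inl ⟨hyF, hxF, hR1⟩)

end AuxProof

/-- For every player `i` and coalition `C` containing `i`, the directed
Hausdorff–Kendall-tau distance from the preference to the coalition never exceeds
the reverse direction: `→τ(⊵⁺_i, C⁺_i) ≤ →τ(C⁺_i, ⊵⁺_i)`. -/
theorem dirTau_pref_le_rev {P : Type*} [DecidableEq P] {i : P} (pr : FENPref P i)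
    (C : Finset P) (hiC : i ∈ C) :
    dirTau (insert i pr.friends) pr.prefPlus (pr.coalPlus C) ≤
      dirTau (insert i pr.friends) (pr.coalPlus C) pr.prefPlus := by
  classical
  set S := insert i pr.friends with hSdef
  have hπ := prefPlus_wo pr
  have hσ := coalPlus_wo pr C
  obtain ⟨A0, hA0⟩ := exists_linExtOn hσ.refl hσ.trans
  set Opp : Set (P × P) :=
    {p : P × P | p.1 ∈ S ∧ p.2 ∈ S ∧ strictOf pr.prefPlus p.1 p.2 ∧
      strictOf (pr.coalPlus C) p.2 p.1} with hOppdef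
  have hOppFin : Opp.Finite :=
    (S.finite_toSet.prod S.finite_toSet).subset (fun p hp => ⟨hp.1, hp.2.1⟩)
  have step1 : dirTau S pr.prefPlus (pr.coalPlus C) ≤ Opp.ncard := by
    rw [dirTau]
    apply csSup_le'
    rintro n ⟨B, hB, rfl⟩
    set A : P → P → Prop := fun x y =>
      strictOf pr.prefPlus x y ∨ (indiffOf pr.prefPlus x y ∧ B x y) with hAdef
    have hAext : IsLinExtOn S pr.prefPlus A := by
      constructor
      · intro x hx h
        rcases h with ⟨h1, h2⟩ | ⟨-, h⟩
        · exact h2 h1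
        · exact hB.irrefl x hx h
      · intro x hx y hy z hz hxy hyz
        rcases hxy with ⟨h1, h2⟩ | ⟨⟨t1, t2⟩, hb1⟩ <;>
          rcases hyz with ⟨g1, g2⟩ | ⟨⟨u1, u2⟩, hb2⟩
        · exact Or.inl ⟨hπ.trans x hx y hy z hz h1 g1,
            fun hzx => h2 (hπ.trans y hy z hz x hx g1 hzx)⟩
        · exact Or.inl ⟨hπ.trans x hx y hy z hz h1 u1,
            fun hzx => h2 (hπ.trans y hy z hz x hx u1 hzx)⟩
        · exact Or.inl ⟨hπ.trans x hx y hy z hz t1 g1,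
            fun hzx => g2 (hπ.trans z hz x hx y hy hzx t1)⟩
        · exact Or.inr ⟨⟨hπ.trans x hx y hy z hz t1 u1,
            hπ.trans z hz y hy x hx u2 t2⟩, hB.trans x hx y hy z hz hb1 hb2⟩
      · intro x hx y hy hne
        rcases hπ.total x hx y hy with h | h
        · by_cases h' : pr.prefPlus y x
          · rcases hB.total x hx y hy hne with hb | hb
            · exact Or.inl (Or.inr ⟨⟨h, h'⟩, hb⟩)
            · exact Or.inr (Or.inr ⟨⟨h', h⟩, hb⟩)
          · exact Or.inl (Or.inl ⟨h, h'⟩)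
        · by_cases h' : pr.prefPlus x y
          · rcases hB.total x hx y hy hne with hb | hb
            · exact Or.inl (Or.inr ⟨⟨h', h⟩, hb⟩)
            · exact Or.inr (Or.inr ⟨⟨h, h'⟩, hb⟩)
          · exact Or.inr (Or.inl ⟨h, h'⟩)
      · intro x _ y _ h
        exact Or.inl h
    have hsub : {p : P × P | p.1 ∈ S ∧ p.2 ∈ S ∧ A p.1 p.2 ∧ B p.2 p.1} ⊆ Opp := by
      rintro ⟨x, y⟩ ⟨hx, hy, hAxy, hByx⟩
      rcases hAxy with hstrict | ⟨htie, hBxy⟩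
      · refine ⟨hx, hy, hstrict, ?_⟩
        by_cases h1 : pr.coalPlus C x y
        · by_cases h2 : pr.coalPlus C y x
          · exact (key_no_tie pr C hstrict h1 h2).elim
          · exact (linExt_asymm hB hx hy (hB.extend x hx y hy ⟨h1, h2⟩) hByx).elim
        · rcases hσ.total x hx y hy with h | h
          · exact absurd h h1
          · exact ⟨h, h1⟩
      · exact (linExt_asymm hB hy hx hByx hBxy).elim
    have hτ : kendallTau S A B ≤ Opp.ncard := by
      rw [kendallTau]
      exact Set.ncard_le_ncard hsub hOppFin
    exact le_trans (Nat.sInf_le ⟨A, hAext, rfl⟩) hτ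
  have step2 : Opp.ncard ≤ dirTau S (pr.coalPlus C) pr.prefPlus := by
    obtain ⟨Bπ, hBπ⟩ := exists_linExtOn hπ.refl hπ.trans
    rw [dirTau]
    have hbdd : BddAbove {n : ℕ | ∃ B' : P → P → Prop, IsLinExtOn S pr.prefPlus B' ∧
        n = sInf {m : ℕ | ∃ A' : P → P → Prop, IsLinExtOn S (pr.coalPlus C) A' ∧
          m = kendallTau S A' B'}} := by
      refine ⟨((S ×ˢ S : Finset (P × P)) : Set (P × P)).ncard, ?_⟩
      rintro n ⟨B', hB', rfl⟩
      have h1 : kendallTau S A0 B' ≤ ((S ×ˢ S : Finset (P × P)) : Set (P × P)).ncard := by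
        rw [kendallTau]
        exact Set.ncard_le_ncard
          (fun p hp => Finset.mem_coe.mpr (Finset.mem_product.mpr ⟨hp.1, hp.2.1⟩))
          (S ×ˢ S).finite_toSet
      exact le_trans (Nat.sInf_le ⟨A0, hA0, rfl⟩) h1
    have hge : Opp.ncard ≤ sInf {m : ℕ | ∃ A' : P → P → Prop,
        IsLinExtOn S (pr.coalPlus C) A' ∧ m = kendallTau S A' Bπ} := by
      refine le_csInf ⟨kendallTau S A0 Bπ, ⟨A0, hA0, rfl⟩⟩ ?_
      rintro m ⟨A', hA', rfl⟩
      have himg : Prod.swap '' Opp ⊆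
          {p : P × P | p.1 ∈ S ∧ p.2 ∈ S ∧ A' p.1 p.2 ∧ Bπ p.2 p.1} := by
        rintro p ⟨q, hq, rfl⟩
        exact ⟨hq.2.1, hq.1, hA'.extend q.2 hq.2.1 q.1 hq.1 hq.2.2.2,
          hBπ.extend q.1 hq.1 q.2 hq.2.1 hq.2.2.1⟩
      have hfin2 : ({p : P × P | p.1 ∈ S ∧ p.2 ∈ S ∧ A' p.1 p.2 ∧ Bπ p.2 p.1}).Finite :=
        (S.finite_toSet.prod S.finite_toSet).subset (fun p hp => ⟨hp.1, hp.2.1⟩)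
      have h2 : (Prod.swap '' Opp).ncard ≤ kendallTau S A' Bπ := by
        rw [kendallTau]
        exact Set.ncard_le_ncard himg hfin2
      rwa [Set.ncard_image_of_injective Opp Prod.swap_injective] at h2
    exact le_trans hge (le_csSup hbdd ⟨Bπ, hBπ, rfl⟩)
  exact le_trans step1 step2
end

section
/- Consider the FEN-hedonic game with distance-based preferences on five players N = ℤ/5ℤ where each player k has the single friend k+1 and the two enemies k+2 and k+3 (enemies mutually indifferent). Then no coalition structure of this game is individually stable, and consequently no coalition structure is Nash stable. -/
/-! Coalition structures and stability notions. -/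

section Structures

variable {P : Type*} [DecidableEq P] [Fintype P]

/-- A coalition structure: a partition of the player set into nonempty coalitions. -/
def IsCoalitionStructure (Γ : Finset (Finset P)) : Prop :=
  ∅ ∉ Γ ∧ ∀ x : P, ∃! C, C ∈ Γ ∧ x ∈ C

/-- `Γ` is Nash stable: no player `k` and no coalition `C ∈ Γ ∪ {∅}` such that
`k` strictly prefers `C ∪ {k}` to `k`'s own coalition. -/
def NashStable (pr : ∀ k : P, FENPref P k) (Γ : Finset (Finset P)) : Prop :=
  ¬ ∃ (k : P) (Ck C : Finset P), Ck ∈ Γ ∧ k ∈ Ck ∧ (C ∈ Γ ∨ C = ∅) ∧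
      (pr k).delta (insert k C) < (pr k).delta Ck

/-- `Γ` is individually stable: no Nash deviation where the deviating player
is moreover welcome in the new coalition. -/
def IndividuallyStable (pr : ∀ k : P, FENPref P k) (Γ : Finset (Finset P)) : Prop :=
  ¬ ∃ (k : P) (Ck C : Finset P), Ck ∈ Γ ∧ k ∈ Ck ∧ (C ∈ Γ ∨ C = ∅) ∧
      (pr k).delta (insert k C) < (pr k).delta Ck ∧
      ∀ j ∈ C, (pr j).delta (insert k C) ≤ (pr j).delta C

/-- `Γ` is contractually individually stable: no individual-stability deviation
where the deviating player is moreover not bound to the former coalition. -/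
def ContractuallyIndividuallyStable (pr : ∀ k : P, FENPref P k) (Γ : Finset (Finset P)) : Prop :=
  ¬ ∃ (k : P) (Ck C : Finset P), Ck ∈ Γ ∧ k ∈ Ck ∧ (C ∈ Γ ∨ C = ∅) ∧
      (pr k).delta (insert k C) < (pr k).delta Ck ∧
      (∀ j ∈ C, (pr j).delta (insert k C) ≤ (pr j).delta C) ∧
      (∀ j ∈ Ck.erase k, (pr j).delta (Ck.erase k) ≤ (pr j).delta Ck)

/-- `Γ` is perfect: every player is in one of their most preferred coalitions. -/
def PerfectStructure (pr : ∀ k : P, FENPref P k) (Γ : Finset (Finset P)) : Prop :=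
  ∀ k : P, ∀ Ck ∈ Γ, k ∈ Ck → ∀ C : Finset P, k ∈ C → (pr k).delta Ck ≤ (pr k).delta C

end Structures

/-! When a player ranks neither its friends nor its enemies among themselves, the directed
Hausdorff–Kendall-tau distance only counts pairs: `δ(⊵_i, C) = |N⁺_i \ C| + |N⁻_i ∩ C|`.
This comes from a general formula: for two weak orders given by ranks, `→τ` is the number of
pairs strictly ordered by the first rank but not by the second, since the inner minimum breaks
the ties of the first order like the given extension of the second, and the outer maximum breaks
the ties of the second order against the first.

On the five-cycle, player `k` thus pays one for missing `k + 1` and one for each of `k + 2`,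
`k + 3` it is with. In an individually stable partition nobody pays more than one, since going
alone costs one and needs nobody's consent; and a player separated from its friend must be
barred from its friend's coalition, so that coalition contains `k + 2` or `k + 3`, the only
players who object to `k`. Chasing these two constraints around the cycle is contradictory, and
the deviation found is also a Nash deviation. -/

section Rank

variable {P : Type*}

def byRank {α : Type*} [LinearOrder α] (κ : P → α) (x y : P) : Prop := κ y ≤ κ x

def lexByRank {α : Type*} [LinearOrder α] (κ : P → α) (W : P → P → Prop) (x y : P) : Prop :=
  κ y < κ x ∨ (κ x = κ y ∧ W x y)

theorem strictOf_byRank {α : Type*} [LinearOrder α] {κ : P → α} {x y : P} :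
    strictOf (byRank κ) x y ↔ κ y < κ x :=
  lt_iff_le_not_ge.symm

variable {S : Finset P} {R R' A : P → P → Prop}

theorem IsLinExtOn.asymm (hA : IsLinExtOn S R A) {x y : P} (hx : x ∈ S) (hy : y ∈ S)
    (h : A x y) : ¬ A y x :=
  fun h' => hA.irrefl x hx (hA.trans x hx y hy x hx h h')

theorem IsLinExtOn.of_strictOf_imp (hA : IsLinExtOn S R' A)
    (h : ∀ x ∈ S, ∀ y ∈ S, strictOf R x y → strictOf R' x y) : IsLinExtOn S R A :=
  ⟨hA.irrefl, hA.trans, hA.total, fun x hx y hy hxy => hA.extend x hx y hy (h x hx y hy hxy)⟩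

theorem isLinExtOn_congr (h : ∀ x ∈ S, ∀ y ∈ S, R x y ↔ R' x y) :
    IsLinExtOn S R A ↔ IsLinExtOn S R' A := by
  have hs : ∀ x ∈ S, ∀ y ∈ S, strictOf R x y ↔ strictOf R' x y := fun x hx y hy => by
    rw [strictOf, strictOf, h x hx y hy, h y hy x hx]
  exact ⟨fun hA => hA.of_strictOf_imp fun x hx y hy => (hs x hx y hy).2,
    fun hA => hA.of_strictOf_imp fun x hx y hy => (hs x hx y hy).1⟩

theorem dirTau_congr {R₁ R₁' R₂ R₂' : P → P → Prop}
    (h₁ : ∀ x ∈ S, ∀ y ∈ S, R₁ x y ↔ R₁' x y) (h₂ : ∀ x ∈ S, ∀ y ∈ S, R₂ x y ↔ R₂' x y) :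
    dirTau S R₁ R₂ = dirTau S R₁' R₂' := by
  simp only [dirTau, isLinExtOn_congr h₁, isLinExtOn_congr h₂]

theorem isLinExtOn_lexByRank {α : Type*} [LinearOrder α] (κ : P → α) {W : P → P → Prop}
    (hW : IsLinExtOn S R W) : IsLinExtOn S (byRank κ) (lexByRank κ W) where
  irrefl x hx := by
    rintro (h | ⟨-, h⟩)
    exacts [lt_irrefl _ h, hW.irrefl x hx h]
  trans x hx y hy z hz := by
    rintro (hxy | ⟨hxy, hWxy⟩) (hyz | ⟨hyz, hWyz⟩)
    · exact Or.inl (hyz.trans hxy)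
    · exact Or.inl (hyz ▸ hxy)
    · exact Or.inl (hxy ▸ hyz)
    · exact Or.inr ⟨hxy.trans hyz, hW.trans x hx y hy z hz hWxy hWyz⟩
  total x hx y hy hne := by
    rcases lt_trichotomy (κ x) (κ y) with h | h | h
    · exact Or.inr (Or.inl h)
    · exact (hW.total x hx y hy hne).imp (fun h' => Or.inr ⟨h, h'⟩) fun h' => Or.inr ⟨h.symm, h'⟩
    · exact Or.inl (Or.inl h)
  extend _ _ _ _ h := Or.inl (strictOf_byRank.mp h)

theorem kendallTau_le_card {B : P → P → Prop} {D : Finset (P × P)}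
    (h : ∀ x ∈ S, ∀ y ∈ S, A x y → B y x → (x, y) ∈ D) : kendallTau S A B ≤ D.card := by
  rw [kendallTau, ← Set.ncard_coe_finset]
  exact Set.ncard_le_ncard (fun p hp => h _ hp.1 _ hp.2.1 hp.2.2.1 hp.2.2.2) D.finite_toSet

theorem card_le_kendallTau {B : P → P → Prop} {D : Finset (P × P)}
    (h : ∀ p ∈ D, p.1 ∈ S ∧ p.2 ∈ S ∧ A p.1 p.2 ∧ B p.2 p.1) : D.card ≤ kendallTau S A B := by
  rw [kendallTau, ← Set.ncard_coe_finset]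
  refine Set.ncard_le_ncard (fun p hp => h p hp) ((S ×ˢ S).finite_toSet.subset ?_)
  rintro p ⟨hp₁, hp₂, -⟩
  exact Finset.mem_product.2 ⟨hp₁, hp₂⟩

theorem dirTau_byRank {α β : Type*} [LinearOrder α] [LinearOrder β] (κ₁ : P → α) (κ₂ : P → β) :
    dirTau S (byRank κ₁) (byRank κ₂) =
      ((S ×ˢ S).filter fun p => κ₁ p.2 < κ₁ p.1 ∧ κ₂ p.1 ≤ κ₂ p.2).card := by
  set D := (S ×ˢ S).filter fun p => κ₁ p.2 < κ₁ p.1 ∧ κ₂ p.1 ≤ κ₂ p.2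
  -- Breaking the ties of `κ₁` as `B` does leaves only the inversions counted by `D`.
  have inner_le : ∀ B, IsLinExtOn S (byRank κ₂) B →
      sInf {m | ∃ A, IsLinExtOn S (byRank κ₁) A ∧ m = kendallTau S A B} ≤ D.card := by
    intro B hB
    calc _ ≤ kendallTau S (lexByRank κ₁ B) B :=
          Nat.sInf_le (by exact ⟨_, isLinExtOn_lexByRank κ₁ hB, rfl⟩)
      _ ≤ D.card := kendallTau_le_card ?_
    rintro x hx y hy (hlt | ⟨-, hBxy⟩) hByx
    · refine Finset.mem_filter.2 ⟨Finset.mem_product.2 ⟨hx, hy⟩, hlt, not_lt.1 fun h => ?_⟩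
      exact hB.asymm hy hx hByx (hB.extend x hx y hy (strictOf_byRank.2 h))
    · exact absurd hByx (hB.asymm hx hy hBxy)
  -- The worst `B` breaks the ties of `κ₂` against `κ₁`, then arbitrarily.
  set B := lexByRank (fun x => toLex (κ₂ x, OrderDual.toDual (κ₁ x))) WellOrderingRel
  have hW : IsLinExtOn S WellOrderingRel WellOrderingRel :=
    ⟨fun x _ => irrefl x, fun x _ y _ z _ => _root_.trans, fun x _ y _ hne =>
      (trichotomous_of WellOrderingRel x y).imp_right (Or.resolve_left · hne), fun _ _ _ _ h => h.1⟩
  have hB : IsLinExtOn S (byRank κ₂) B := (isLinExtOn_lexByRank _ hW).of_strictOf_imp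
    fun x _ y _ h => strictOf_byRank.2 (Prod.Lex.toLex_lt_toLex.2 (Or.inl (strictOf_byRank.1 h)))
  have inner_eq : sInf {m | ∃ A, IsLinExtOn S (byRank κ₁) A ∧ m = kendallTau S A B} = D.card := by
    refine le_antisymm (inner_le B hB) (le_csInf ?_ ?_)
    · exact ⟨_, _, isLinExtOn_lexByRank κ₁ hB, rfl⟩
    rintro _ ⟨A, hA, rfl⟩
    refine card_le_kendallTau fun p hp => ?_
    obtain ⟨hpS, hlt, hle⟩ := Finset.mem_filter.1 hp
    obtain ⟨hp₁, hp₂⟩ := Finset.mem_product.1 hpS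
    refine ⟨hp₁, hp₂, hA.extend _ hp₁ _ hp₂ (strictOf_byRank.2 hlt), Or.inl ?_⟩
    exact Prod.Lex.toLex_lt_toLex.2 (hle.lt_or_eq.imp_right fun h => ⟨h, hlt⟩)
  refine IsGreatest.csSup_eq ⟨⟨B, hB, inner_eq.symm⟩, ?_⟩
  rintro _ ⟨B', hB', rfl⟩
  exact inner_le B' hB'

end Rank

namespace FENPref

variable {P : Type*} {i : P} {pr : FENPref P i}

theorem Rp_of_friends_eq_singleton {f : P} (hf : pr.friends = {f}) :
    ∀ x ∈ pr.friends, ∀ y ∈ pr.friends, pr.Rp x y := by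
  intro x hx y hy
  have hxy : x = y := by rw [hf, Finset.mem_singleton] at hx hy; rw [hx, hy]
  exact hxy ▸ pr.wo_p.refl x hx

variable [DecidableEq P]

/-- The rank of `x` in `C⁺_i` and in `C⁻_i` when `⊵_i` is indifference: members of `C` on top,
then `i`, then the non-members. -/
def memberRank (i : P) (C : Finset P) (x : P) : ℕ := if x = i then 1 else if x ∈ C then 2 else 0

theorem prefPlus_iff_byRank (hRp : ∀ x ∈ pr.friends, ∀ y ∈ pr.friends, pr.Rp x y) :
    ∀ x ∈ insert i pr.friends, ∀ y ∈ insert i pr.friends,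
      pr.prefPlus x y ↔ byRank (fun z => if z = i then 0 else 1) x y := by
  have hi := pr.self_not_friend
  intro x hx y hy
  rcases Finset.mem_insert.1 hx with rfl | hx <;> rcases Finset.mem_insert.1 hy with rfl | hy <;>
    grind [prefPlus, byRank]

theorem prefMinus_iff_byRank (hRm : ∀ x ∈ pr.enemies, ∀ y ∈ pr.enemies, pr.Rm x y) :
    ∀ x ∈ insert i pr.enemies, ∀ y ∈ insert i pr.enemies,
      pr.prefMinus x y ↔ byRank (fun z => if z = i then 1 else 0) x y := by
  have hi := pr.self_not_enemy
  intro x hx y hy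
  rcases Finset.mem_insert.1 hx with rfl | hx <;> rcases Finset.mem_insert.1 hy with rfl | hy <;>
    grind [prefMinus, byRank]

theorem coalPlus_iff_byRank (hRp : ∀ x ∈ pr.friends, ∀ y ∈ pr.friends, pr.Rp x y)
    (C : Finset P) : ∀ x ∈ insert i pr.friends, ∀ y ∈ insert i pr.friends,
      pr.coalPlus C x y ↔ byRank (memberRank i C) x y := by
  have hi := pr.self_not_friend
  intro x hx y hy
  rcases Finset.mem_insert.1 hx with rfl | hx <;> rcases Finset.mem_insert.1 hy with rfl | hy <;>
    grind [coalPlus, byRank, memberRank]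

theorem coalMinus_iff_byRank (hRm : ∀ x ∈ pr.enemies, ∀ y ∈ pr.enemies, pr.Rm x y)
    (C : Finset P) : ∀ x ∈ insert i pr.enemies, ∀ y ∈ insert i pr.enemies,
      pr.coalMinus C x y ↔ byRank (memberRank i C) x y := by
  have hi := pr.self_not_enemy
  intro x hx y hy
  rcases Finset.mem_insert.1 hx with rfl | hx <;> rcases Finset.mem_insert.1 hy with rfl | hy <;>
    grind [coalMinus, byRank, memberRank]

theorem deltaPlus_eq_card_sdiff (hRp : ∀ x ∈ pr.friends, ∀ y ∈ pr.friends, pr.Rp x y)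
    (C : Finset P) : pr.deltaPlus C = (pr.friends \ C).card := by
  have hi := pr.self_not_friend
  rw [deltaPlus, dirTau_congr (prefPlus_iff_byRank hRp) (coalPlus_iff_byRank hRp C),
    dirTau_byRank]
  refine Finset.card_nbij' Prod.fst (·, i) ?_ ?_ ?_ ?_ <;> intro p <;> grind [memberRank]

theorem deltaMinus_eq_card_inter (hRm : ∀ x ∈ pr.enemies, ∀ y ∈ pr.enemies, pr.Rm x y)
    (C : Finset P) : pr.deltaMinus C = (pr.enemies ∩ C).card := by
  have hi := pr.self_not_enemy
  rw [deltaMinus, dirTau_congr (prefMinus_iff_byRank hRm) (coalMinus_iff_byRank hRm C),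
    dirTau_byRank]
  refine Finset.card_nbij' Prod.snd (i, ·) ?_ ?_ ?_ ?_ <;> intro p <;> grind [memberRank]

theorem delta_eq_card (hRp : ∀ x ∈ pr.friends, ∀ y ∈ pr.friends, pr.Rp x y)
    (hRm : ∀ x ∈ pr.enemies, ∀ y ∈ pr.enemies, pr.Rm x y) (C : Finset P) :
    pr.delta C = (pr.friends \ C).card + (pr.enemies ∩ C).card := by
  rw [delta, deltaPlus_eq_card_sdiff hRp, deltaMinus_eq_card_inter hRm]

theorem delta_insert_le (hRp : ∀ x ∈ pr.friends, ∀ y ∈ pr.friends, pr.Rp x y)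
    (hRm : ∀ x ∈ pr.enemies, ∀ y ∈ pr.enemies, pr.Rm x y) {k : P} (hk : k ∉ pr.enemies)
    (C : Finset P) : pr.delta (insert k C) ≤ pr.delta C := by
  rw [delta_eq_card hRp hRm, delta_eq_card hRp hRm, Finset.inter_insert_of_notMem hk]
  gcongr
  exact Finset.subset_insert k C

end FENPref

theorem NashStable.individuallyStable {P : Type*} [DecidableEq P] {pr : ∀ k : P, FENPref P k}
    {Γ : Finset (Finset P)} (h : NashStable pr Γ) : IndividuallyStable pr Γ :=
  fun ⟨k, Ck, C, hCk, hk, hC, hlt, _⟩ => h ⟨k, Ck, C, hCk, hk, hC, hlt⟩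

theorem IsCoalitionStructure.eq_of_mem {P : Type*} {Γ : Finset (Finset P)}
    (hΓ : IsCoalitionStructure Γ) {C D : Finset P} (hC : C ∈ Γ) (hD : D ∈ Γ) {x : P}
    (hxC : x ∈ C) (hxD : x ∈ D) : C = D :=
  (hΓ.2 x).unique ⟨hC, hxC⟩ ⟨hD, hxD⟩

section FiveCycle

def fiveCycleCost (k : ZMod 5) (C : Finset (ZMod 5)) : ℕ :=
  (if k + 1 ∈ C then 0 else 1) + (if k + 2 ∈ C then 1 else 0) + (if k + 3 ∈ C then 1 else 0)

/-- If every friendship `B (k + 1) = B k` holds, everybody sits with both enemies. Otherwise the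
two constraints, chased around the cycle from a broken friendship, are contradictory. -/
theorem five_cycle_partition_core (B : ZMod 5 → Finset (ZMod 5))
    (hB : ∀ x y, x ∈ B y ↔ B x = B y) (hcost : ∀ k, fiveCycleCost k (B k) ≤ 1)
    (hjoin : ∀ k, k + 1 ∉ B k → k + 2 ∈ B (k + 1) ∨ k + 3 ∈ B (k + 1)) : False := by
  have h0 := hcost 0; have h1 := hcost 1; have h2 := hcost 2; have h3 := hcost 3
  have h4 := hcost 4
  have j0 := hjoin 0; have j1 := hjoin 1; have j2 := hjoin 2; have j3 := hjoin 3
  have j4 := hjoin 4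
  simp only [fiveCycleCost, hB] at h0 h1 h2 h3 h4 j0 j1 j2 j3 j4
  clear hcost hjoin hB
  reduce_mod_char at h0 h1 h2 h3 h4 j0 j1 j2 j3 j4
  by_cases a0 : B 1 = B 0 <;> by_cases a1 : B 2 = B 1 <;> by_cases a2 : B 3 = B 2 <;>
    by_cases a3 : B 4 = B 3 <;> by_cases a4 : B 0 = B 4 <;> grind

variable {pr : ∀ k : ZMod 5, FENPref (ZMod 5) k}

theorem five_cycle_delta (hf : ∀ k : ZMod 5, (pr k).friends = {k + 1})
    (he : ∀ k : ZMod 5, (pr k).enemies = {k + 2, k + 3})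
    (hindiff : ∀ k : ZMod 5, ∀ x ∈ (pr k).enemies, ∀ y ∈ (pr k).enemies, (pr k).Rm x y)
    (k : ZMod 5) (C : Finset (ZMod 5)) : (pr k).delta C = fiveCycleCost k C := by
  have h23 : k + 2 ≠ k + 3 := (add_right_injective k).ne (by decide)
  rw [FENPref.delta_eq_card (FENPref.Rp_of_friends_eq_singleton (hf k)) (hindiff k), hf, he,
    fiveCycleCost]
  by_cases h1 : k + 1 ∈ C <;> by_cases h2 : k + 2 ∈ C <;> by_cases h3 : k + 3 ∈ C <;>
    simp [h1, h2, h3, h23, Finset.card_sdiff, Finset.inter_singleton_of_mem,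
      Finset.inter_singleton_of_notMem, Finset.insert_inter_of_mem, Finset.insert_inter_of_notMem]

theorem five_cycle_not_individuallyStable (hf : ∀ k : ZMod 5, (pr k).friends = {k + 1})
    (he : ∀ k : ZMod 5, (pr k).enemies = {k + 2, k + 3})
    (hindiff : ∀ k : ZMod 5, ∀ x ∈ (pr k).enemies, ∀ y ∈ (pr k).enemies, (pr k).Rm x y)
    {Γ : Finset (Finset (ZMod 5))} (hΓ : IsCoalitionStructure Γ) : ¬ IndividuallyStable pr Γ := by
  intro hIS
  choose B hBΓ hmemB using fun x => (hΓ.2 x).exists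
  have hB : ∀ x y, x ∈ B y ↔ B x = B y := fun x y =>
    ⟨fun h => hΓ.eq_of_mem (hBΓ x) (hBΓ y) (hmemB x) h, fun h => h ▸ hmemB x⟩
  have hdelta := five_cycle_delta hf he hindiff
  refine five_cycle_partition_core B hB (fun k => ?_) (fun k hfriend => ?_)
  · by_contra! hcost
    refine hIS ⟨k, B k, ∅, hBΓ k, hmemB k, Or.inr rfl, ?_, by simp⟩
    have hne : ∀ k : ZMod 5, k + 1 ≠ k ∧ k + 2 ≠ k ∧ k + 3 ≠ k := by decide
    rw [hdelta, hdelta]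
    simpa [fiveCycleCost, hne] using hcost
  · by_contra! hwelcome
    refine hIS ⟨k, B k, B (k + 1), hBΓ k, hmemB k, Or.inl (hBΓ _), ?_, fun j hj => ?_⟩
    · have hk2 : k + 2 ≠ k := mt add_eq_left.1 (by decide)
      have hk3 : k + 3 ≠ k := mt add_eq_left.1 (by decide)
      rw [hdelta, hdelta]
      simp [fiveCycleCost, hfriend, hk2, hk3, hwelcome, hmemB]
    · refine FENPref.delta_insert_le (FENPref.Rp_of_friends_eq_singleton (hf j)) (hindiff j) ?_ _
      have hcycle : ∀ j : ZMod 5, j + 2 + 3 = j ∧ j + 3 + 2 = j := by decide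
      rw [he, Finset.mem_insert, Finset.mem_singleton]
      rintro (rfl | rfl)
      · exact hwelcome.2 ((hcycle j).1.symm ▸ hj)
      · exact hwelcome.1 ((hcycle j).2.symm ▸ hj)

end FiveCycle

/-- The FEN-hedonic game with distance-based preferences on the five players `ZMod 5`,
where each player `k` has the single friend `k+1` and the two mutually indifferent
enemies `k+2` and `k+3`, admits no individually stable coalition structure, and
consequently no Nash stable coalition structure. -/
theorem no_individually_stable_five_cycle (pr : ∀ k : ZMod 5, FENPref (ZMod 5) k)
    (hf : ∀ k : ZMod 5, (pr k).friends = {k + 1})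
    (he : ∀ k : ZMod 5, (pr k).enemies = {k + 2, k + 3})
    (hindiff : ∀ k : ZMod 5, ∀ x ∈ (pr k).enemies, ∀ y ∈ (pr k).enemies, (pr k).Rm x y) :
    ∀ Γ : Finset (Finset (ZMod 5)), IsCoalitionStructure Γ →
      ¬ IndividuallyStable pr Γ ∧ ¬ NashStable pr Γ := by
  intro Γ hΓ
  have hIS := five_cycle_not_individuallyStable hf he hindiff hΓ
  exact ⟨hIS, fun hNS => hIS hNS.individuallyStable⟩
end

section
/- Every FEN-hedonic game with distance-based preferences admits a contractually individually stable coalition structure. -/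
/-- Every FEN-hedonic game with distance-based preferences admits a contractually
individually stable coalition structure. -/
theorem exists_contractually_individually_stable {P : Type*} [DecidableEq P] [Fintype P]
    (pr : ∀ k : P, FENPref P k) :
    ∃ Γ : Finset (Finset P), IsCoalitionStructure Γ ∧
      ContractuallyIndividuallyStable pr Γ := by
    classical
  set f : Finset P → ℕ := fun B => ∑ j ∈ B, (pr j).delta B with hf
  set phi : Finset (Finset P) → ℕ := fun Γ => ∑ B ∈ Γ, f B with hphi
  have h0 : f ∅ = 0 := by simp [hf]
  have hsing : IsCoalitionStructure ((Finset.univ : Finset P).image ({·})) := by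
    constructor
    · intro h
      obtain ⟨y, _, hy⟩ := Finset.mem_image.1 h
      exact Finset.singleton_ne_empty y hy
    · intro x
      refine ⟨{x}, ⟨Finset.mem_image.2 ⟨x, Finset.mem_univ x, rfl⟩, Finset.mem_singleton_self x⟩, ?_⟩
      rintro B ⟨hB, hxB⟩
      obtain ⟨y, _, rfl⟩ := Finset.mem_image.1 hB
      rw [Finset.mem_singleton] at hxB
      subst hxB; rfl
  set T : Finset (Finset (Finset P)) := Finset.univ.filter IsCoalitionStructure with hT
  have hTne : T.Nonempty := ⟨_, Finset.mem_filter.2 ⟨Finset.mem_univ _, hsing⟩⟩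
  obtain ⟨Γ, hΓT, hmin⟩ := T.exists_min_image phi hTne
  have hΓ : IsCoalitionStructure Γ := by simpa [hT] using hΓT
  refine ⟨Γ, hΓ, ?_⟩
  rintro ⟨k, Ck, C, hCkΓ, hkCk, hC, hlt, hwel, hbind⟩
  obtain ⟨hne, hu⟩ := hΓ
  set D := insert k C with hD
  set E := Ck.erase k with hE
  have hkD : k ∈ D := Finset.mem_insert_self _ _
  have hkE : k ∉ E := Finset.notMem_erase _ _
  have huniq : ∀ x : P, ∀ B ∈ Γ, x ∈ B → ∀ B' ∈ Γ, x ∈ B' → B = B' := by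
    intro x B hB hxB B' hB' hxB'
    obtain ⟨B0, _, h0'⟩ := hu x
    rw [h0' B ⟨hB, hxB⟩, h0' B' ⟨hB', hxB'⟩]
  have hCkuniq : ∀ B ∈ Γ, k ∈ B → B = Ck := fun B hB hkB =>
    huniq k B hB hkB Ck hCkΓ hkCk
  have hDΓ : D ∉ Γ := by
    intro h
    have hDCk : D = Ck := hCkuniq D h hkD
    rw [hDCk] at hlt
    exact lt_irrefl _ hlt
  have hkC : k ∉ C := by
    intro hkC
    have hDC : D = C := Finset.insert_eq_self.2 hkC
    rcases hC with hCΓ | rfl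
    · exact hDΓ (hDC ▸ hCΓ)
    · exact Finset.notMem_empty k hkC
  have hCne : C ∈ Γ → C ≠ Ck := fun _ hEq => hkC (hEq ▸ hkCk)
  have hEΓ : E ∉ Γ := by
    intro h
    have hEne : E.Nonempty := by
      rcases Finset.eq_empty_or_nonempty E with hE' | hE'
      · rw [hE'] at h; exact absurd h hne
      · exact hE'
    obtain ⟨j, hj⟩ := hEne
    have hjCk : j ∈ Ck := Finset.mem_of_mem_erase hj
    have : E = Ck := huniq j E h hj Ck hCkΓ hjCk
    exact hkE (this ▸ hkCk)
  set Γ₀ := (Γ.erase Ck).erase C with hΓ₀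
  set Γ' := (insert D (insert E Γ₀)).erase ∅ with hΓ'
  have memΓ' : ∀ B, B ∈ Γ' ↔ B ≠ ∅ ∧ (B = D ∨ B = E ∨ (B ∈ Γ ∧ B ≠ C ∧ B ≠ Ck)) := by
    intro B
    rw [hΓ']
    simp only [Finset.mem_erase, Finset.mem_insert, hΓ₀]
    constructor
    · rintro ⟨hB0, h | h | h⟩
      · exact ⟨hB0, Or.inl h⟩
      · exact ⟨hB0, Or.inr (Or.inl h)⟩
      · obtain ⟨hBC, hBCk, hBΓ⟩ := h
        exact ⟨hB0, Or.inr (Or.inr ⟨hBΓ, hBC, hBCk⟩)⟩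
    · rintro ⟨hB0, h | h | ⟨hBΓ, hBC, hBCk⟩⟩
      · exact ⟨hB0, Or.inl h⟩
      · exact ⟨hB0, Or.inr (Or.inl h)⟩
      · exact ⟨hB0, Or.inr (Or.inr ⟨hBC, hBCk, hBΓ⟩)⟩
  have hDne : D ≠ ∅ := Finset.ne_empty_of_mem hkD
  have hDE : D ≠ E := fun h => hkE (h ▸ hkD)
  have hDΓ₀ : D ∉ insert E Γ₀ := by
    intro h
    rcases Finset.mem_insert.1 h with h | h
    · exact hDE h
    · exact hDΓ (Finset.mem_of_mem_erase (Finset.mem_of_mem_erase h))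
  have hEΓ₀ : E ∉ Γ₀ := fun h => hEΓ (Finset.mem_of_mem_erase (Finset.mem_of_mem_erase h))
  have hstruct : IsCoalitionStructure Γ' := by
    constructor
    · exact fun h => (Finset.mem_erase.1 h).1 rfl
    · intro x
      by_cases hxk : x = k
      · subst hxk
        refine ⟨D, ⟨(memΓ' D).2 ⟨hDne, Or.inl rfl⟩, hkD⟩, ?_⟩
        rintro B ⟨hB, hxB⟩
        rcases (memΓ' B).1 hB with ⟨_, rfl | rfl | ⟨hBΓ, _, hBCk⟩⟩
        · rfl
        · exact absurd hxB hkE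
        · exact absurd (hCkuniq B hBΓ hxB) hBCk
      · by_cases hxCk : x ∈ Ck
        · have hxE : x ∈ E := Finset.mem_erase.2 ⟨hxk, hxCk⟩
          refine ⟨E, ⟨(memΓ' E).2 ⟨Finset.ne_empty_of_mem hxE, Or.inr (Or.inl rfl)⟩, hxE⟩, ?_⟩
          rintro B ⟨hB, hxB⟩
          rcases (memΓ' B).1 hB with ⟨_, rfl | rfl | ⟨hBΓ, hBC, hBCk⟩⟩
          · rcases Finset.mem_insert.1 hxB with rfl | hxC
            · exact absurd rfl hxk
            · rcases hC with hCΓ | rfl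
              · exact absurd (huniq x C hCΓ hxC Ck hCkΓ hxCk) (hCne hCΓ)
              · exact absurd hxC (Finset.notMem_empty x)
          · rfl
          · exact absurd (huniq x B hBΓ hxB Ck hCkΓ hxCk) hBCk
        · by_cases hxC : x ∈ C
          · have hCΓ : C ∈ Γ := by
              rcases hC with h | rfl
              · exact h
              · exact absurd hxC (Finset.notMem_empty x)
            have hxD : x ∈ D := Finset.mem_insert_of_mem hxC
            refine ⟨D, ⟨(memΓ' D).2 ⟨hDne, Or.inl rfl⟩, hxD⟩, ?_⟩
            rintro B ⟨hB, hxB⟩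
            rcases (memΓ' B).1 hB with ⟨_, rfl | rfl | ⟨hBΓ, hBC, _⟩⟩
            · rfl
            · exact absurd (Finset.mem_of_mem_erase hxB) hxCk
            · exact absurd (huniq x B hBΓ hxB C hCΓ hxC) hBC
          · obtain ⟨B, ⟨hBΓ, hxB⟩, _⟩ := hu x
            have hBCk : B ≠ Ck := fun h => hxCk (h ▸ hxB)
            have hBC : B ≠ C := fun h => hxC (h ▸ hxB)
            refine ⟨B, ⟨(memΓ' B).2 ⟨Finset.ne_empty_of_mem hxB,
              Or.inr (Or.inr ⟨hBΓ, hBC, hBCk⟩)⟩, hxB⟩, ?_⟩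
            rintro B' ⟨hB', hxB'⟩
            rcases (memΓ' B').1 hB' with ⟨_, rfl | rfl | ⟨hB'Γ, _, _⟩⟩
            · rcases Finset.mem_insert.1 hxB' with rfl | h
              · exact absurd rfl hxk
              · exact absurd h hxC
            · exact absurd (Finset.mem_of_mem_erase hxB') hxCk
            · exact huniq x B' hB'Γ hxB' B hBΓ hxB
  have hphi' : phi Γ' = f D + (f E + phi Γ₀) := by
    rw [hphi]
    simp only
    rw [hΓ', Finset.sum_erase _ h0, Finset.sum_insert hDΓ₀, Finset.sum_insert hEΓ₀]
  have hphiΓ : phi Γ = f Ck + (f C + phi Γ₀) := by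
    rw [hphi]
    simp only
    rw [← Finset.add_sum_erase _ f hCkΓ]
    congr 1
    rcases hC with hCΓ | rfl
    · rw [hΓ₀, ← Finset.add_sum_erase _ f (Finset.mem_erase.2 ⟨hCne hCΓ, hCΓ⟩)]
    · rw [hΓ₀, Finset.sum_erase _ h0, h0, zero_add]
  have h1 : f D = (pr k).delta D + ∑ j ∈ C, (pr j).delta D := by
    rw [hf]
    simp only
    rw [hD, Finset.sum_insert hkC]
  have h2 : ∑ j ∈ C, (pr j).delta D ≤ ∑ j ∈ C, (pr j).delta C :=
    Finset.sum_le_sum hwel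
  have h3 : f E ≤ ∑ j ∈ E, (pr j).delta Ck := Finset.sum_le_sum hbind
  have h4 : f Ck = (pr k).delta Ck + ∑ j ∈ E, (pr j).delta Ck := by
    rw [hf]
    simp only
    rw [hE]
    exact (Finset.add_sum_erase _ _ hkCk).symm
  have hfC : f C = ∑ j ∈ C, (pr j).delta C := rfl
  have hΓ'T : Γ' ∈ T := by simp [hT, hstruct]
  have hmin' := hmin Γ' hΓ'T
  omega
end
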